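/- arXiv:1908.01648 — 3 statements merged into one kernel-verified Lean document; each statement's English description precedes it below -/
import Mathlib

section
/- For the warped product metric g = ξ(r) dr² + ρ(r)² g_Y on I × Y, take linearly independent tangent vectors A = k₁∂_r + a and B = k₂∂_r + b with k₁, k₂ ∈ ℝ and a, b ∈ T_y Y. If a and b are linearly independent, then K^g(A,B) = [K^g(∂_r)·ξ·g(k₂a − k₁b, k₂a − k₁b) + K^g(a,b)·(g(a,a)g(b,b) − g(a,b)²)] / [ξ·g(k₂a − k₁b, k₂a − k₁b) + g(a,a)g(b,b) − g(a,b)²]. If a and b are linearly dependent, then K^g(A,B) = K^g(∂_r). -/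
/-! STATEMENT 2: sectional curvature of general planes in a warped product over a one-dimensional base. -/

noncomputable section

open Real Set Filter Topology

variable {E : Type*} [NormedAddCommGroup E] [NormedSpace ℝ E]

/-- `g` is (pointwise) a pseudo-Riemannian metric on the chart domain `U`:
symmetric, bilinear and nondegenerate at every point of `U`. -/
def IsPseudoMetricOn (U : Set E) (g : E → E → E → ℝ) : Prop :=
  (∀ x ∈ U, ∀ u v, g x u v = g x v u) ∧
  (∀ x ∈ U, ∀ u, IsLinearMap ℝ (g x u)) ∧
  (∀ x ∈ U, ∀ u, (∀ v, g x u v = 0) → u = 0)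

/-- `Γ` is the Levi-Civita connection of the metric `g` on the chart domain `U`
(`Γ x u v` are the Christoffel symbols): torsion-free, bilinear and compatible
with the metric. -/
def IsLeviCivitaOn (U : Set E) (g : E → E → E → ℝ) (Γ : E → E → E → E) : Prop :=
  (∀ x ∈ U, ∀ u v, Γ x u v = Γ x v u) ∧
  (∀ x ∈ U, ∀ u, IsLinearMap ℝ (Γ x u)) ∧
  (∀ x ∈ U, ∀ u v w, fderiv ℝ (fun z => g z v w) x u
      = g x (Γ x u v) w + g x v (Γ x u w))

/-- The curvature tensor of the connection `Γ`, with the sign convention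
`R(A,B) = [∇_A, ∇_B] − ∇_{[A,B]}`, evaluated in the chart on constant vector
fields (so that `[u,v] = 0`). -/
def curvOf (Γ : E → E → E → E) (x u v w : E) : E :=
  fderiv ℝ (fun z => Γ z v w) x u - fderiv ℝ (fun z => Γ z u w) x v
    + Γ x u (Γ x v w) - Γ x v (Γ x u w)

/-- The sectional curvature `K^g` of the plane spanned by `u`, `v`. -/
def sectionalOf (g : E → E → E → ℝ) (Γ : E → E → E → E) (x u v : E) : ℝ :=
  g x (curvOf Γ x u v v) u / (g x u u * g x v v - g x u v ^ 2)

variable {F : Type*} [NormedAddCommGroup F] [NormedSpace ℝ F]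

/-- The warped product metric `g = ξ(r) dr² + ρ(r)² g_Y` on `I × Y ⊆ ℝ × F`. -/
def warpedMetric (ξ ρ : ℝ → ℝ) (gY : F → F → F → ℝ) (p : ℝ × F) (u v : ℝ × F) : ℝ :=
  ξ p.1 * u.1 * v.1 + ρ p.1 ^ 2 * gY p.2 u.2 v.2

/-- `K^g(∂_r) = (−2ρ''ξ + ρ'ξ')/(2ρξ²)`. -/
def Kradial (ξ ρ : ℝ → ℝ) (r : ℝ) : ℝ :=
  (-2 * deriv (deriv ρ) r * ξ r + deriv ρ r * deriv ξ r) / (2 * ρ r * ξ r ^ 2)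

set_option maxHeartbeats 4000000 in
/-- For the warped product metric `g = ξ(r) dr² + ρ(r)² g_Y` on
`I × Y` and linearly independent `A = k₁∂_r + a`, `B = k₂∂_r + b`:
if `a, b` are linearly independent then
`K^g(A,B) = [K^g(∂_r)·ξ·g(k₂a−k₁b, k₂a−k₁b) + K^g(a,b)·(g(a,a)g(b,b)−g(a,b)²)]
            / [ξ·g(k₂a−k₁b, k₂a−k₁b) + g(a,a)g(b,b)−g(a,b)²]`,
and if `a, b` are linearly dependent then `K^g(A,B) = K^g(∂_r)`.
(The planes on which sectional curvatures are evaluated are assumed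
nondegenerate, as required for `K^g` to be defined.) -/
theorem statement_2
    (I : Set ℝ) (hIopen : IsOpen I) (hIconn : I.OrdConnected)
    (ξ : ℝ → ℝ) (hξsm : ContDiffOn ℝ (⊤ : ℕ∞) ξ I) (hξ0 : ∀ r ∈ I, ξ r ≠ 0)
    (ρ : ℝ → ℝ) (hρsm : ContDiffOn ℝ (⊤ : ℕ∞) ρ I) (hρpos : ∀ r ∈ I, 0 < ρ r)
    (Y : Set F) (hYopen : IsOpen Y)
    (gY : F → F → F → ℝ) (hgY : IsPseudoMetricOn Y gY)
    (hgYsm : ∀ u v, ContDiffOn ℝ (⊤ : ℕ∞) (fun y => gY y u v) Y)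
    (Γ : ℝ × F → ℝ × F → ℝ × F → ℝ × F)
    (hΓ : IsLeviCivitaOn (I ×ˢ Y) (warpedMetric ξ ρ gY) Γ)
    (hΓsm : ∀ u v, ContDiffOn ℝ (⊤ : ℕ∞) (fun p => Γ p u v) (I ×ˢ Y)) :
    ∀ r ∈ I, ∀ y ∈ Y, ∀ (k₁ k₂ : ℝ) (a b : F),
      LinearIndependent ℝ ![((k₁, a) : ℝ × F), ((k₂, b) : ℝ × F)] →
      -- the plane spanned by `A` and `B` is nondegenerate
      warpedMetric ξ ρ gY (r, y) (k₁, a) (k₁, a) *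
          warpedMetric ξ ρ gY (r, y) (k₂, b) (k₂, b) -
          warpedMetric ξ ρ gY (r, y) (k₁, a) (k₂, b) ^ 2 ≠ 0 →
      -- case 1: `a`, `b` linearly independent (with a nondegenerate fibre plane)
      ((LinearIndependent ℝ ![a, b] →
        warpedMetric ξ ρ gY (r, y) ((0 : ℝ), a) ((0 : ℝ), a) *
            warpedMetric ξ ρ gY (r, y) ((0 : ℝ), b) ((0 : ℝ), b) -
            warpedMetric ξ ρ gY (r, y) ((0 : ℝ), a) ((0 : ℝ), b) ^ 2 ≠ 0 →
        sectionalOf (warpedMetric ξ ρ gY) Γ (r, y) (k₁, a) (k₂, b)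
          = (Kradial ξ ρ r * ξ r *
                warpedMetric ξ ρ gY (r, y) ((0 : ℝ), k₂ • a - k₁ • b)
                  ((0 : ℝ), k₂ • a - k₁ • b)
              + sectionalOf (warpedMetric ξ ρ gY) Γ (r, y) ((0 : ℝ), a) ((0 : ℝ), b) *
                (warpedMetric ξ ρ gY (r, y) ((0 : ℝ), a) ((0 : ℝ), a) *
                    warpedMetric ξ ρ gY (r, y) ((0 : ℝ), b) ((0 : ℝ), b) -
                    warpedMetric ξ ρ gY (r, y) ((0 : ℝ), a) ((0 : ℝ), b) ^ 2))
            / (ξ r *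
                warpedMetric ξ ρ gY (r, y) ((0 : ℝ), k₂ • a - k₁ • b)
                  ((0 : ℝ), k₂ • a - k₁ • b)
              + (warpedMetric ξ ρ gY (r, y) ((0 : ℝ), a) ((0 : ℝ), a) *
                  warpedMetric ξ ρ gY (r, y) ((0 : ℝ), b) ((0 : ℝ), b) -
                  warpedMetric ξ ρ gY (r, y) ((0 : ℝ), a) ((0 : ℝ), b) ^ 2))) ∧
      -- case 2: `a`, `b` linearly dependent
      (¬ LinearIndependent ℝ ![a, b] →
        sectionalOf (warpedMetric ξ ρ gY) Γ (r, y) (k₁, a) (k₂, b)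
          = Kradial ξ ρ r)) := by
  intro r hr y hy k₁ k₂ a b _hli hnd
  classical
  have hU : IsOpen (I ×ˢ Y) := hIopen.prod hYopen
  obtain ⟨hΓsymm, hΓlin, hΓcompat⟩ := hΓ
  obtain ⟨hGsym, hGlin, hGnd⟩ := hgY
  have hpmem : ((r, y) : ℝ × F) ∈ I ×ˢ Y := ⟨hr, hy⟩
  have hmemU : (I ×ˢ Y) ∈ 𝓝 ((r, y) : ℝ × F) := hU.mem_nhds hpmem
  have hξd : ∀ s ∈ I, HasDerivAt ξ (deriv ξ s) s := fun s hs =>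
    ((hξsm.contDiffAt (hIopen.mem_nhds hs)).differentiableAt (by simp)).hasDerivAt
  have hρd : ∀ s ∈ I, HasDerivAt ρ (deriv ρ s) s := fun s hs =>
    ((hρsm.contDiffAt (hIopen.mem_nhds hs)).differentiableAt (by simp)).hasDerivAt
  have hξd2 : HasDerivAt (deriv ξ) (deriv (deriv ξ) r) r :=
    ((((hξsm.deriv_of_isOpen hIopen (m := 1) (by norm_cast)).contDiffAt
      (hIopen.mem_nhds hr)).differentiableAt one_ne_zero)).hasDerivAt
  have hρd2 : HasDerivAt (deriv ρ) (deriv (deriv ρ) r) r :=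
    ((((hρsm.deriv_of_isOpen hIopen (m := 1) (by norm_cast)).contDiffAt
      (hIopen.mem_nhds hr)).differentiableAt one_ne_zero)).hasDerivAt
  have hgYd : ∀ t ∈ Y, ∀ c d : F, DifferentiableAt ℝ (fun t' => gY t' c d) t := fun t ht c d =>
    ((hgYsm c d).contDiffAt (hYopen.mem_nhds ht)).differentiableAt (by simp)
  -- fderiv of the metric with constant vectors plugged in
  have hgmD : ∀ z ∈ I ×ˢ Y, ∀ v w u : ℝ × F,
      fderiv ℝ (fun q => warpedMetric ξ ρ gY q v w) z u =
        deriv ξ z.1 * u.1 * (v.1 * w.1)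
          + 2 * ρ z.1 * deriv ρ z.1 * u.1 * gY z.2 v.2 w.2
          + ρ z.1 ^ 2 * fderiv ℝ (fun t => gY t v.2 w.2) z.2 u.2 := by
    intro z hz v w u
    have hz1 : z.1 ∈ I := hz.1
    have hz2 : z.2 ∈ Y := hz.2
    have h1 : HasFDerivAt (fun q : ℝ × F => ξ q.1)
        ((deriv ξ z.1) • ContinuousLinearMap.fst ℝ ℝ F) z :=
      HasDerivAt.comp_hasFDerivAt z (hξd z.1 hz1)
        (hasFDerivAt_fst : HasFDerivAt Prod.fst (ContinuousLinearMap.fst ℝ ℝ F) z)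
    have h2 : HasFDerivAt (fun q : ℝ × F => ρ q.1 ^ 2)
        ((2 * ρ z.1 ^ 1 * deriv ρ z.1) • ContinuousLinearMap.fst ℝ ℝ F) z := by
      have := HasDerivAt.comp_hasFDerivAt z ((hρd z.1 hz1).pow 2)
        (hasFDerivAt_fst : HasFDerivAt Prod.fst (ContinuousLinearMap.fst ℝ ℝ F) z)
      exact this.congr_fderiv (by simp)
    have h3 : HasFDerivAt (fun q : ℝ × F => gY q.2 v.2 w.2)
        ((fderiv ℝ (fun t => gY t v.2 w.2) z.2).comp (ContinuousLinearMap.snd ℝ ℝ F)) z :=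
      ((hgYd z.2 hz2 v.2 w.2).hasFDerivAt).comp z hasFDerivAt_snd
    have htot := ((h1.mul_const v.1).mul_const w.1).add (h2.mul h3)
    have heq : (fun q : ℝ × F => warpedMetric ξ ρ gY q v w)
        = fun q : ℝ × F => ξ q.1 * v.1 * w.1 + ρ q.1 ^ 2 * gY q.2 v.2 w.2 := rfl
    rw [heq, HasFDerivAt.fderiv (f := fun q : ℝ × F => ξ q.1 * v.1 * w.1 + ρ q.1 ^ 2 * gY q.2 v.2 w.2) htot]
    simp [ContinuousLinearMap.add_apply, ContinuousLinearMap.smul_apply,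
      ContinuousLinearMap.comp_apply, ContinuousLinearMap.coe_comp']
    ring
  -- symmetry of the metric
  have gsymm : ∀ z ∈ I ×ˢ Y, ∀ x x' : ℝ × F,
      warpedMetric ξ ρ gY z x x' = warpedMetric ξ ρ gY z x' x := by
    intro z hz x x'
    simp only [warpedMetric]
    rw [hGsym z.2 hz.2]
    ring
  -- Koszul formula
  have koszul : ∀ z ∈ I ×ˢ Y, ∀ u v w : ℝ × F,
      warpedMetric ξ ρ gY z (Γ z u v) w =
        (fderiv ℝ (fun q => warpedMetric ξ ρ gY q v w) z u
          + fderiv ℝ (fun q => warpedMetric ξ ρ gY q u w) z v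
          - fderiv ℝ (fun q => warpedMetric ξ ρ gY q u v) z w) / 2 := by
    intro z hz u v w
    have E1 := hΓcompat z hz u v w
    have E2 := hΓcompat z hz v u w
    have E3 := hΓcompat z hz w u v
    rw [hΓsymm z hz v u] at E2
    rw [hΓsymm z hz w u, hΓsymm z hz w v] at E3
    rw [gsymm z hz (Γ z u w) v] at E3
    rw [E1, E2, E3]
    ring
  -- explicit Koszul formula
  have koszulE : ∀ z ∈ I ×ˢ Y, ∀ u v w : ℝ × F,
      warpedMetric ξ ρ gY z (Γ z u v) w =
        deriv ξ z.1 * (u.1 * v.1 * w.1) / 2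
        + ρ z.1 * deriv ρ z.1 *
            (u.1 * gY z.2 v.2 w.2 + v.1 * gY z.2 u.2 w.2 - w.1 * gY z.2 u.2 v.2)
        + ρ z.1 ^ 2 *
            ((fderiv ℝ (fun t => gY t v.2 w.2) z.2 u.2
              + fderiv ℝ (fun t => gY t u.2 w.2) z.2 v.2
              - fderiv ℝ (fun t => gY t u.2 v.2) z.2 w.2) / 2) := by
    intro z hz u v w
    rw [koszul z hz u v w, hgmD z hz v w u, hgmD z hz u w v, hgmD z hz u v w]
    ring
  -- first component of the Christoffel symbols
  have hΓ1 : ∀ z ∈ I ×ˢ Y, ∀ u v : ℝ × F,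
      (Γ z u v).1 = (deriv ξ z.1 * (u.1 * v.1) / 2
        - ρ z.1 * deriv ρ z.1 * gY z.2 u.2 v.2) / ξ z.1 := by
    intro z hz u v
    have h := koszulE z hz u v (1, (0 : F))
    have hz2 : z.2 ∈ Y := hz.2
    have e0 : ∀ x : F, gY z.2 x (0 : F) = 0 := fun x => (hGlin z.2 hz2 x).map_zero
    have e1 : ∀ c : F, fderiv ℝ (fun t => gY t c (0 : F)) z.2 = 0 := by
      intro c
      have hev : (fun t => gY t c (0 : F)) =ᶠ[𝓝 z.2] (fun _ => (0 : ℝ)) :=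
        eventually_of_mem (hYopen.mem_nhds hz2) (fun t ht => (hGlin t ht c).map_zero)
      rw [hev.fderiv_eq, fderiv_fun_const]
      rfl
    simp only [warpedMetric] at h
    simp only [e0, e1, ContinuousLinearMap.zero_apply, ContinuousLinearMap.map_zero,
      mul_zero, zero_mul, mul_one, add_zero, zero_add, sub_zero] at h
    rw [eq_div_iff (hξ0 z.1 hz.1)]
    linarith
  -- the `gY`-pairing of the second component of the Christoffel symbols
  have hΓpair : ∀ z ∈ I ×ˢ Y, ∀ u v : ℝ × F, ∀ c : F,
      gY z.2 ((Γ z u v).2) c =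
        deriv ρ z.1 / ρ z.1 * (u.1 * gY z.2 v.2 c + v.1 * gY z.2 u.2 c)
        + (fderiv ℝ (fun t => gY t v.2 c) z.2 u.2
            + fderiv ℝ (fun t => gY t u.2 c) z.2 v.2
            - fderiv ℝ (fun t => gY t u.2 v.2) z.2 c) / 2 := by
    intro z hz u v c
    have h := koszulE z hz u v (0, c)
    simp only [warpedMetric, mul_zero, zero_mul, add_zero, zero_add, sub_zero, mul_one] at h
    have hρ0 : ρ z.1 ≠ 0 := (hρpos z.1 hz.1).ne'
    field_simp at h ⊢
    apply mul_left_cancel₀ hρ0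
    linear_combination h
  -- linearity of gY in the first slot
  have gsub1 : ∀ t ∈ Y, ∀ x x' c : F, gY t (x - x') c = gY t x c - gY t x' c := by
    intro t ht x x' c
    rw [hGsym t ht (x - x') c, (hGlin t ht c).map_sub, hGsym t ht c x, hGsym t ht c x']
  have gadd1 : ∀ t ∈ Y, ∀ x x' c : F, gY t (x + x') c = gY t x c + gY t x' c := by
    intro t ht x x' c
    rw [hGsym t ht (x + x') c, (hGlin t ht c).map_add, hGsym t ht c x, hGsym t ht c x']
  have gsmul1 : ∀ t ∈ Y, ∀ (s : ℝ), ∀ x c : F, gY t (s • x) c = s * gY t x c := by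
    intro t ht s x c
    rw [hGsym t ht (s • x) c, (hGlin t ht c).map_smul, hGsym t ht c x, smul_eq_mul]
  -- structure of the second component of the Christoffel symbols
  have hΓ2 : ∀ z ∈ I ×ˢ Y, ∀ u v : ℝ × F,
      (Γ z u v).2 = (deriv ρ z.1 / ρ z.1) • (u.1 • v.2)
        + (deriv ρ z.1 / ρ z.1) • (v.1 • u.2) + (Γ z (0, u.2) (0, v.2)).2 := by
    intro z hz u v
    have hz2 : z.2 ∈ Y := hz.2
    have key : ∀ c, gY z.2 ((Γ z u v).2 - ((deriv ρ z.1 / ρ z.1) • (u.1 • v.2)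
        + (deriv ρ z.1 / ρ z.1) • (v.1 • u.2) + (Γ z (0, u.2) (0, v.2)).2)) c = 0 := by
      intro c
      have h1 := hΓpair z hz u v c
      have h2 := hΓpair z hz (0, u.2) (0, v.2) c
      simp only [Prod.fst, Prod.snd] at h2
      rw [gsub1 z.2 hz2, gadd1 z.2 hz2, gadd1 z.2 hz2, gsmul1 z.2 hz2, gsmul1 z.2 hz2,
        gsmul1 z.2 hz2, gsmul1 z.2 hz2, h1, h2]
      ring
    exact sub_eq_zero.mp (hGnd z.2 hz2 _ key)
  -- radial constancy of the fibre Christoffel symbols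
  have hSconst : ∀ c d : F, ∀ s ∈ I,
      (Γ (s, y) ((0:ℝ), c) ((0:ℝ), d)).2 = (Γ (r, y) ((0:ℝ), c) ((0:ℝ), d)).2 := by
    intro c d s hs
    have key : ∀ e, gY y ((Γ (s, y) ((0:ℝ), c) ((0:ℝ), d)).2
        - (Γ (r, y) ((0:ℝ), c) ((0:ℝ), d)).2) e = 0 := by
      intro e
      have ha := hΓpair (s, y) ⟨hs, hy⟩ ((0:ℝ), c) ((0:ℝ), d) e
      have hb := hΓpair (r, y) hpmem ((0:ℝ), c) ((0:ℝ), d) e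
      simp only [Prod.fst, Prod.snd] at ha hb
      rw [gsub1 y hy, ha, hb]
      ring
    exact sub_eq_zero.mp (hGnd y hy _ key)
  -- differentiability of Γ at the base point
  have hΓdiff : ∀ v w : ℝ × F, DifferentiableAt ℝ (fun z => Γ z v w) (r, y) := fun v w =>
    ((hΓsm v w).differentiableOn (by simp)).differentiableAt hmemU
  have hc2d : HasDerivAt (fun t => -(ρ t * deriv ρ t) / ξ t)
      ((-(deriv ρ r * deriv ρ r + ρ r * deriv (deriv ρ) r) * ξ r
        + ρ r * deriv ρ r * deriv ξ r) / ξ r ^ 2) r := by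
    have hnum : HasDerivAt (fun t => -(ρ t * deriv ρ t))
        (-(deriv ρ r * deriv ρ r + ρ r * deriv (deriv ρ) r)) r :=
      ((hρd r hr).mul hρd2).neg
    have h := hnum.div (hξd r hr) (hξ0 r hr)
    exact h.congr_deriv (by ring)
  -- the radial derivative of the fibre Christoffel symbols
  have hrad : ∀ c d : F, ∀ m : ℝ,
      fderiv ℝ (fun z => Γ z ((0:ℝ), c) ((0:ℝ), d)) (r, y) (m, (0:F))
        = (m * (((-(deriv ρ r * deriv ρ r + ρ r * deriv (deriv ρ) r) * ξ r
            + ρ r * deriv ρ r * deriv ξ r) / ξ r ^ 2) * gY y c d), (0:F)) := by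
    intro c d m
    have hcurve : HasDerivAt (fun t : ℝ => ((t, y) : ℝ × F)) (((1:ℝ), (0:F)) : ℝ × F) r :=
      (hasDerivAt_id r).prodMk (hasDerivAt_const r y)
    have hcomp : HasDerivAt (fun t => Γ (t, y) ((0:ℝ), c) ((0:ℝ), d))
        (fderiv ℝ (fun z => Γ z ((0:ℝ), c) ((0:ℝ), d)) (r, y) ((1:ℝ), (0:F))) r :=
      by have := (hΓdiff ((0:ℝ), c) ((0:ℝ), d)).hasFDerivAt.comp_hasDerivAt r hcurve; exact this
    have hexp : HasDerivAt (fun t => ((-(ρ t * deriv ρ t) / ξ t * gY y c d,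
        (Γ ((r:ℝ), y) ((0:ℝ), c) ((0:ℝ), d)).2) : ℝ × F))
        ((((-(deriv ρ r * deriv ρ r + ρ r * deriv (deriv ρ) r) * ξ r
          + ρ r * deriv ρ r * deriv ξ r) / ξ r ^ 2) * gY y c d, (0:F))) r :=
      (hc2d.mul_const _).prodMk (hasDerivAt_const _ _)
    have hev : (fun t => ((-(ρ t * deriv ρ t) / ξ t * gY y c d,
        (Γ ((r:ℝ), y) ((0:ℝ), c) ((0:ℝ), d)).2) : ℝ × F)) =ᶠ[𝓝 r]
        (fun t => Γ (t, y) ((0:ℝ), c) ((0:ℝ), d)) := by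
      filter_upwards [hIopen.mem_nhds hr] with t ht
      have h1 := hΓ1 (t, y) ⟨ht, hy⟩ ((0:ℝ), c) ((0:ℝ), d)
      have h2 := hSconst c d t ht
      apply Prod.ext
      · simp only [Prod.fst, Prod.snd] at h1 ⊢
        rw [h1]
        ring
      · simp only [Prod.snd] at h2 ⊢
        rw [h2]
    have huniq := hcomp.unique (hexp.congr_of_eventuallyEq hev.symm)
    have hsm : ((m, (0:F)) : ℝ × F) = m • ((1:ℝ), (0:F)) := by
      simp [Prod.smul_mk]
    rw [hsm, ContinuousLinearMap.map_smul, huniq]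
    simp [Prod.smul_mk]
  -- splitting of the full derivative of the Christoffel symbols
  have hDsplit : ∀ v w u : ℝ × F, fderiv ℝ (fun z => Γ z v w) (r, y) u =
      (((deriv (deriv ξ) r * (2 * ξ r) - deriv ξ r * (2 * deriv ξ r)) / (2 * ξ r) ^ 2
          * u.1 * (v.1 * w.1),
        (((deriv (deriv ρ) r * ρ r - deriv ρ r * deriv ρ r) / ρ r ^ 2) * u.1)
          • (v.1 • w.2 + w.1 • v.2)) : ℝ × F)
        + fderiv ℝ (fun z => Γ z ((0:ℝ), v.2) ((0:ℝ), w.2)) (r, y) u := by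
    intro v w u
    -- derivative of the explicit part
    have hc1d : HasDerivAt (fun t => deriv ξ t / (2 * ξ t))
        ((deriv (deriv ξ) r * (2 * ξ r) - deriv ξ r * (2 * deriv ξ r)) / (2 * ξ r) ^ 2) r :=
      hξd2.div ((hξd r hr).const_mul 2) (by simpa using hξ0 r hr)
    have hωd : HasDerivAt (fun t => deriv ρ t / ρ t)
        ((deriv (deriv ρ) r * ρ r - deriv ρ r * deriv ρ r) / ρ r ^ 2) r :=
      hρd2.div (hρd r hr) (hρpos r hr).ne'
    have comp1 : HasFDerivAt (fun z : ℝ × F => deriv ξ z.1 / (2 * ξ z.1) * (v.1 * w.1))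
        ((v.1 * w.1) • (((deriv (deriv ξ) r * (2 * ξ r) - deriv ξ r * (2 * deriv ξ r))
          / (2 * ξ r) ^ 2) • ContinuousLinearMap.fst ℝ ℝ F)) (r, y) :=
      (HasDerivAt.comp_hasFDerivAt (r, y) hc1d
        (hasFDerivAt_fst : HasFDerivAt Prod.fst (ContinuousLinearMap.fst ℝ ℝ F)
          ((r, y) : ℝ × F))).mul_const (v.1 * w.1)
    have comp2 : HasFDerivAt (fun z : ℝ × F => (deriv ρ z.1 / ρ z.1) • (v.1 • w.2 + w.1 • v.2))
        ((ContinuousLinearMap.smulRight (1 : ℝ →L[ℝ] ℝ)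
          (((deriv (deriv ρ) r * ρ r - deriv ρ r * deriv ρ r) / ρ r ^ 2)
            • (v.1 • w.2 + w.1 • v.2))).comp (ContinuousLinearMap.fst ℝ ℝ F)) (r, y) :=
      by
        have := (hasDerivAt_iff_hasFDerivAt.mp (hωd.smul_const (v.1 • w.2 + w.1 • v.2))).comp (r, y)
          (hasFDerivAt_fst : HasFDerivAt Prod.fst (ContinuousLinearMap.fst ℝ ℝ F)
            ((r, y) : ℝ × F))
        exact this
    have hΦ := comp1.prodMk comp2
    have hev : (fun z => Γ z v w) =ᶠ[𝓝 ((r, y) : ℝ × F)]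
        (fun z : ℝ × F => ((deriv ξ z.1 / (2 * ξ z.1) * (v.1 * w.1),
          (deriv ρ z.1 / ρ z.1) • (v.1 • w.2 + w.1 • v.2)) : ℝ × F)
          + Γ z ((0:ℝ), v.2) ((0:ℝ), w.2)) := by
      filter_upwards [hmemU] with z hz
      have h1 := hΓ1 z hz v w
      have h1' := hΓ1 z hz ((0:ℝ), v.2) ((0:ℝ), w.2)
      have h2 := hΓ2 z hz v w
      simp only [Prod.fst, Prod.snd] at h1'
      apply Prod.ext
      · simp only [Prod.fst_add]
        rw [h1, h1']
        field_simp
        ring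
      · simp only [Prod.snd_add]
        rw [h2]
        simp only [smul_add]
    rw [hev.fderiv_eq, fderiv_fun_add hΦ.differentiableAt (hΓdiff ((0:ℝ), v.2) ((0:ℝ), w.2)),
      ContinuousLinearMap.add_apply, hΦ.fderiv]
    congr 1
    simp only [ContinuousLinearMap.prod_apply, ContinuousLinearMap.smul_apply,
      ContinuousLinearMap.coe_comp', Function.comp_apply,
      ContinuousLinearMap.smulRight_apply, ContinuousLinearMap.one_apply,
      ContinuousLinearMap.coe_fst', smul_eq_mul, Prod.mk.injEq]
    constructor
    · ring
    · rw [smul_smul, mul_comm]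
  -- specialised derivative computations
  have hDer1 : fderiv ℝ (fun z => Γ z (k₂, b) (k₂, b)) (r, y) (k₁, a)
      = (((deriv (deriv ξ) r * (2 * ξ r) - deriv ξ r * (2 * deriv ξ r)) / (2 * ξ r) ^ 2
            * k₁ * (k₂ * k₂),
          (((deriv (deriv ρ) r * ρ r - deriv ρ r * deriv ρ r) / ρ r ^ 2) * k₁)
            • (k₂ • b + k₂ • b)) : ℝ × F)
        + ((k₁ * (((-(deriv ρ r * deriv ρ r + ρ r * deriv (deriv ρ) r) * ξ r
              + ρ r * deriv ρ r * deriv ξ r) / ξ r ^ 2) * gY y b b), (0:F))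
          + fderiv ℝ (fun z => Γ z ((0:ℝ), b) ((0:ℝ), b)) (r, y) ((0:ℝ), a)) := by
    have h := hDsplit (k₂, b) (k₂, b) (k₁, a)
    simp only [] at h
    rw [h]
    congr 1
    rw [show ((k₁, a) : ℝ × F) = ((k₁, (0:F)) : ℝ × F) + ((0:ℝ), a) by simp]
    rw [ContinuousLinearMap.map_add, hrad b b k₁]
  have hDer2 : fderiv ℝ (fun z => Γ z (k₁, a) (k₂, b)) (r, y) (k₂, b)
      = (((deriv (deriv ξ) r * (2 * ξ r) - deriv ξ r * (2 * deriv ξ r)) / (2 * ξ r) ^ 2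
            * k₂ * (k₁ * k₂),
          (((deriv (deriv ρ) r * ρ r - deriv ρ r * deriv ρ r) / ρ r ^ 2) * k₂)
            • (k₁ • b + k₂ • a)) : ℝ × F)
        + ((k₂ * (((-(deriv ρ r * deriv ρ r + ρ r * deriv (deriv ρ) r) * ξ r
              + ρ r * deriv ρ r * deriv ξ r) / ξ r ^ 2) * gY y a b), (0:F))
          + fderiv ℝ (fun z => Γ z ((0:ℝ), a) ((0:ℝ), b)) (r, y) ((0:ℝ), b)) := by
    have h := hDsplit (k₁, a) (k₂, b) (k₂, b)
    simp only [] at h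
    rw [h]
    congr 1
    rw [show ((k₂, b) : ℝ × F) = ((k₂, (0:F)) : ℝ × F) + ((0:ℝ), b) by simp]
    rw [ContinuousLinearMap.map_add, hrad a b k₂]
  -- values of the Christoffel symbols at the base point
  have hX1 : (Γ (r, y) (k₂, b) (k₂, b)).1
      = (deriv ξ r * (k₂ * k₂) / 2 - ρ r * deriv ρ r * gY y b b) / ξ r := by
    simpa only [] using hΓ1 (r, y) hpmem (k₂, b) (k₂, b)
  have hY1 : (Γ (r, y) (k₁, a) (k₂, b)).1
      = (deriv ξ r * (k₁ * k₂) / 2 - ρ r * deriv ρ r * gY y a b) / ξ r := by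
    simpa only [] using hΓ1 (r, y) hpmem (k₁, a) (k₂, b)
  have hXf1 : (Γ (r, y) ((0:ℝ), b) ((0:ℝ), b)).1
      = (deriv ξ r * (0 * 0) / 2 - ρ r * deriv ρ r * gY y b b) / ξ r := by
    simpa only [] using hΓ1 (r, y) hpmem ((0:ℝ), b) ((0:ℝ), b)
  have hYf1 : (Γ (r, y) ((0:ℝ), a) ((0:ℝ), b)).1
      = (deriv ξ r * (0 * 0) / 2 - ρ r * deriv ρ r * gY y a b) / ξ r := by
    simpa only [] using hΓ1 (r, y) hpmem ((0:ℝ), a) ((0:ℝ), b)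
  have hX2 : (Γ (r, y) (k₂, b) (k₂, b)).2
      = (deriv ρ r / ρ r) • (k₂ • b) + (deriv ρ r / ρ r) • (k₂ • b)
        + (Γ (r, y) ((0:ℝ), b) ((0:ℝ), b)).2 := by
    simpa only [] using hΓ2 (r, y) hpmem (k₂, b) (k₂, b)
  have hY2 : (Γ (r, y) (k₁, a) (k₂, b)).2
      = (deriv ρ r / ρ r) • (k₁ • b) + (deriv ρ r / ρ r) • (k₂ • a)
        + (Γ (r, y) ((0:ℝ), a) ((0:ℝ), b)).2 := by
    simpa only [] using hΓ2 (r, y) hpmem (k₁, a) (k₂, b)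
  -- entries of Γ applied to Christoffel values: first components
  have hA1 : (Γ (r, y) (k₁, a) (Γ (r, y) (k₂, b) (k₂, b))).1
      = (deriv ξ r * (k₁ * (Γ (r, y) (k₂, b) (k₂, b)).1) / 2
          - ρ r * deriv ρ r * gY y a (Γ (r, y) (k₂, b) (k₂, b)).2) / ξ r := by
    simpa only [] using hΓ1 (r, y) hpmem (k₁, a) (Γ (r, y) (k₂, b) (k₂, b))
  have hB1 : (Γ (r, y) (k₂, b) (Γ (r, y) (k₁, a) (k₂, b))).1
      = (deriv ξ r * (k₂ * (Γ (r, y) (k₁, a) (k₂, b)).1) / 2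
          - ρ r * deriv ρ r * gY y b (Γ (r, y) (k₁, a) (k₂, b)).2) / ξ r := by
    simpa only [] using hΓ1 (r, y) hpmem (k₂, b) (Γ (r, y) (k₁, a) (k₂, b))
  have hC1 : (Γ (r, y) ((0:ℝ), a) (Γ (r, y) ((0:ℝ), b) ((0:ℝ), b))).1
      = (deriv ξ r * (0 * (Γ (r, y) ((0:ℝ), b) ((0:ℝ), b)).1) / 2
          - ρ r * deriv ρ r * gY y a (Γ (r, y) ((0:ℝ), b) ((0:ℝ), b)).2) / ξ r := by
    simpa only [] using hΓ1 (r, y) hpmem ((0:ℝ), a) (Γ (r, y) ((0:ℝ), b) ((0:ℝ), b))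
  have hD1 : (Γ (r, y) ((0:ℝ), b) (Γ (r, y) ((0:ℝ), a) ((0:ℝ), b))).1
      = (deriv ξ r * (0 * (Γ (r, y) ((0:ℝ), a) ((0:ℝ), b)).1) / 2
          - ρ r * deriv ρ r * gY y b (Γ (r, y) ((0:ℝ), a) ((0:ℝ), b)).2) / ξ r := by
    simpa only [] using hΓ1 (r, y) hpmem ((0:ℝ), b) (Γ (r, y) ((0:ℝ), a) ((0:ℝ), b))
  -- second components
  have hA2 : (Γ (r, y) (k₁, a) (Γ (r, y) (k₂, b) (k₂, b))).2
      = (deriv ρ r / ρ r) • (k₁ • (Γ (r, y) (k₂, b) (k₂, b)).2)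
        + (deriv ρ r / ρ r) • ((Γ (r, y) (k₂, b) (k₂, b)).1 • a)
        + (Γ (r, y) ((0:ℝ), a) ((0:ℝ), (Γ (r, y) (k₂, b) (k₂, b)).2)).2 := by
    simpa only [] using hΓ2 (r, y) hpmem (k₁, a) (Γ (r, y) (k₂, b) (k₂, b))
  have hB2 : (Γ (r, y) (k₂, b) (Γ (r, y) (k₁, a) (k₂, b))).2
      = (deriv ρ r / ρ r) • (k₂ • (Γ (r, y) (k₁, a) (k₂, b)).2)
        + (deriv ρ r / ρ r) • ((Γ (r, y) (k₁, a) (k₂, b)).1 • b)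
        + (Γ (r, y) ((0:ℝ), b) ((0:ℝ), (Γ (r, y) (k₁, a) (k₂, b)).2)).2 := by
    simpa only [] using hΓ2 (r, y) hpmem (k₂, b) (Γ (r, y) (k₁, a) (k₂, b))
  have hC2 : (Γ (r, y) ((0:ℝ), a) (Γ (r, y) ((0:ℝ), b) ((0:ℝ), b))).2
      = (deriv ρ r / ρ r) • ((0:ℝ) • (Γ (r, y) ((0:ℝ), b) ((0:ℝ), b)).2)
        + (deriv ρ r / ρ r) • ((Γ (r, y) ((0:ℝ), b) ((0:ℝ), b)).1 • a)
        + (Γ (r, y) ((0:ℝ), a) ((0:ℝ), (Γ (r, y) ((0:ℝ), b) ((0:ℝ), b)).2)).2 := by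
    simpa only [] using hΓ2 (r, y) hpmem ((0:ℝ), a) (Γ (r, y) ((0:ℝ), b) ((0:ℝ), b))
  have hD2 : (Γ (r, y) ((0:ℝ), b) (Γ (r, y) ((0:ℝ), a) ((0:ℝ), b))).2
      = (deriv ρ r / ρ r) • ((0:ℝ) • (Γ (r, y) ((0:ℝ), a) ((0:ℝ), b)).2)
        + (deriv ρ r / ρ r) • ((Γ (r, y) ((0:ℝ), a) ((0:ℝ), b)).1 • b)
        + (Γ (r, y) ((0:ℝ), b) ((0:ℝ), (Γ (r, y) ((0:ℝ), a) ((0:ℝ), b)).2)).2 := by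
    simpa only [] using hΓ2 (r, y) hpmem ((0:ℝ), b) (Γ (r, y) ((0:ℝ), a) ((0:ℝ), b))
  -- pairings with the second components
  have hpairX : gY y a (Γ (r, y) (k₂, b) (k₂, b)).2
      = deriv ρ r / ρ r * (k₂ * gY y a b) + deriv ρ r / ρ r * (k₂ * gY y a b)
        + gY y a (Γ (r, y) ((0:ℝ), b) ((0:ℝ), b)).2 := by
    rw [hX2]
    simp only [(hGlin y hy a).map_add, (hGlin y hy a).map_smul, smul_eq_mul]
  have hpairY : gY y b (Γ (r, y) (k₁, a) (k₂, b)).2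
      = deriv ρ r / ρ r * (k₁ * gY y b b) + deriv ρ r / ρ r * (k₂ * gY y b a)
        + gY y b (Γ (r, y) ((0:ℝ), a) ((0:ℝ), b)).2 := by
    rw [hY2]
    simp only [(hGlin y hy b).map_add, (hGlin y hy b).map_smul, smul_eq_mul]
  have hba : gY y b a = gY y a b := hGsym y hy b a
  have hswap : Γ (r, y) ((0:ℝ), b) ((0:ℝ), a) = Γ (r, y) ((0:ℝ), a) ((0:ℝ), b) :=
    hΓsymm (r, y) hpmem _ _
  -- inner expansions
  have hQ1 : (Γ (r, y) ((0:ℝ), a) ((0:ℝ), (Γ (r, y) (k₂, b) (k₂, b)).2)).2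
      = (deriv ρ r / ρ r) • (k₂ • (Γ (r, y) ((0:ℝ), a) ((0:ℝ), b)).2)
        + (deriv ρ r / ρ r) • (k₂ • (Γ (r, y) ((0:ℝ), a) ((0:ℝ), b)).2)
        + (Γ (r, y) ((0:ℝ), a) ((0:ℝ), (Γ (r, y) ((0:ℝ), b) ((0:ℝ), b)).2)).2 := by
    rw [hX2]
    rw [show ((0:ℝ), (deriv ρ r / ρ r) • (k₂ • b) + (deriv ρ r / ρ r) • (k₂ • b)
          + (Γ (r, y) ((0:ℝ), b) ((0:ℝ), b)).2)
        = (deriv ρ r / ρ r) • (k₂ • (((0:ℝ), b) : ℝ × F))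
          + (deriv ρ r / ρ r) • (k₂ • (((0:ℝ), b) : ℝ × F))
          + ((0:ℝ), (Γ (r, y) ((0:ℝ), b) ((0:ℝ), b)).2) by simp]
    simp only [(hΓlin (r, y) hpmem ((0:ℝ), a)).map_add,
      (hΓlin (r, y) hpmem ((0:ℝ), a)).map_smul, Prod.snd_add, Prod.smul_snd]
  have hQ2 : (Γ (r, y) ((0:ℝ), b) ((0:ℝ), (Γ (r, y) (k₁, a) (k₂, b)).2)).2
      = (deriv ρ r / ρ r) • (k₁ • (Γ (r, y) ((0:ℝ), b) ((0:ℝ), b)).2)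
        + (deriv ρ r / ρ r) • (k₂ • (Γ (r, y) ((0:ℝ), b) ((0:ℝ), a)).2)
        + (Γ (r, y) ((0:ℝ), b) ((0:ℝ), (Γ (r, y) ((0:ℝ), a) ((0:ℝ), b)).2)).2 := by
    rw [hY2]
    rw [show ((0:ℝ), (deriv ρ r / ρ r) • (k₁ • b) + (deriv ρ r / ρ r) • (k₂ • a)
          + (Γ (r, y) ((0:ℝ), a) ((0:ℝ), b)).2)
        = (deriv ρ r / ρ r) • (k₁ • (((0:ℝ), b) : ℝ × F))
          + (deriv ρ r / ρ r) • (k₂ • (((0:ℝ), a) : ℝ × F))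
          + ((0:ℝ), (Γ (r, y) ((0:ℝ), a) ((0:ℝ), b)).2) by simp]
    simp only [(hΓlin (r, y) hpmem ((0:ℝ), b)).map_add,
      (hΓlin (r, y) hpmem ((0:ℝ), b)).map_smul, Prod.snd_add, Prod.smul_snd]
  have hkey : curvOf Γ (r, y) (k₁, a) (k₂, b) (k₂, b)
      = curvOf Γ (r, y) ((0:ℝ), a) ((0:ℝ), b) ((0:ℝ), b)
        + ((ρ r ^ 2 * Kradial ξ ρ r * (k₁ * gY y b b - k₂ * gY y a b),
           (-(ξ r * Kradial ξ ρ r) * (k₁ * k₂)) • b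
             + (ξ r * Kradial ξ ρ r * k₂ ^ 2) • a) : ℝ × F) := by
    apply Prod.ext
    · simp only [curvOf, Prod.fst_add, Prod.fst_sub]
      rw [hDer1, hDer2]
      simp only [Prod.fst_add, Prod.fst_sub]
      rw [hA1, hB1, hC1, hD1, hpairX, hpairY, hX1, hY1, hXf1, hYf1, hba]
      simp only [Kradial]
      field_simp [hξ0 r hr, (hρpos r hr).ne']
      ring_nf
    · simp only [curvOf, Prod.snd_add, Prod.snd_sub]
      rw [hDer1, hDer2]
      simp only [Prod.snd_add, Prod.snd_sub]
      rw [hA2, hB2, hQ1, hQ2, hswap, hC2, hD2, hX2, hY2, hX1, hY1, hXf1, hYf1]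
      simp only [Kradial]
      match_scalars
      all_goals field_simp [hξ0 r hr, (hρpos r hr).ne']
      all_goals ring_nf
      all_goals field_simp [hξ0 r hr, (hρpos r hr).ne']
      all_goals ring
  -- first component of the derivative of the fibre Christoffel symbols
  have hDGsym : ∀ c d : F, fderiv ℝ (fun t => gY t c d) y = fderiv ℝ (fun t => gY t d c) y :=
    fun c d => Filter.EventuallyEq.fderiv_eq
      (eventually_of_mem (hYopen.mem_nhds hy) fun t ht => hGsym t ht c d)
  have hfst : ∀ c d : F, ∀ u : ℝ × F,
      (fderiv ℝ (fun z => Γ z ((0:ℝ), c) ((0:ℝ), d)) (r, y) u).1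
        = ((-(deriv ρ r * deriv ρ r + ρ r * deriv (deriv ρ) r) * ξ r
            + ρ r * deriv ρ r * deriv ξ r) / ξ r ^ 2 * u.1) * gY y c d
          + (-(ρ r * deriv ρ r) / ξ r) * fderiv ℝ (fun t => gY t c d) y u.2 := by
    intro c d u
    have h1 : HasFDerivAt (fun z => (Γ z ((0:ℝ), c) ((0:ℝ), d)).1)
        ((ContinuousLinearMap.fst ℝ ℝ F).comp
          (fderiv ℝ (fun z => Γ z ((0:ℝ), c) ((0:ℝ), d)) (r, y))) (r, y) :=
      ((hΓdiff ((0:ℝ), c) ((0:ℝ), d)).hasFDerivAt).fst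
    have hgc : HasFDerivAt (fun z : ℝ × F => gY z.2 c d)
        ((fderiv ℝ (fun t => gY t c d) y).comp (ContinuousLinearMap.snd ℝ ℝ F)) (r, y) :=
      by have := ((hgYd y hy c d).hasFDerivAt).comp (r, y) (hasFDerivAt_snd : HasFDerivAt Prod.snd (ContinuousLinearMap.snd ℝ ℝ F) ((r, y) : ℝ × F)); exact this
    have hc2c : HasFDerivAt (fun z : ℝ × F => -(ρ z.1 * deriv ρ z.1) / ξ z.1)
        (((-(deriv ρ r * deriv ρ r + ρ r * deriv (deriv ρ) r) * ξ r
          + ρ r * deriv ρ r * deriv ξ r) / ξ r ^ 2) • ContinuousLinearMap.fst ℝ ℝ F) (r, y) :=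
      by
        have := HasDerivAt.comp_hasFDerivAt (r, y) hc2d
          (hasFDerivAt_fst : HasFDerivAt Prod.fst (ContinuousLinearMap.fst ℝ ℝ F)
            ((r, y) : ℝ × F))
        exact this
    have h2 := hc2c.mul hgc
    have hev : (fun z : ℝ × F => -(ρ z.1 * deriv ρ z.1) / ξ z.1 * gY z.2 c d) =ᶠ[𝓝 ((r, y) : ℝ × F)]
        (fun z => (Γ z ((0:ℝ), c) ((0:ℝ), d)).1) := by
      filter_upwards [hmemU] with z hz
      rw [hΓ1 z hz ((0:ℝ), c) ((0:ℝ), d)]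
      simp only []
      ring
    have huniq := h1.unique (h2.congr_of_eventuallyEq hev.symm)
    have := congrArg (fun L : (ℝ × F) →L[ℝ] ℝ => L u) huniq
    simp only [ContinuousLinearMap.coe_comp', Function.comp_apply,
      ContinuousLinearMap.coe_fst', ContinuousLinearMap.coe_snd',
      ContinuousLinearMap.add_apply,
      ContinuousLinearMap.smul_apply, smul_eq_mul] at this
    rw [this]
    ring
  -- the first component of the fibre curvature vanishes
  have hZ : (curvOf Γ (r, y) ((0:ℝ), a) ((0:ℝ), b) ((0:ℝ), b)).1 = 0 := by
    simp only [curvOf, Prod.fst_add, Prod.fst_sub]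
    rw [hfst b b ((0:ℝ), a), hfst a b ((0:ℝ), b), hC1, hD1]
    have hp1 : gY y a (Γ (r, y) ((0:ℝ), b) ((0:ℝ), b)).2
        = gY y (Γ (r, y) ((0:ℝ), b) ((0:ℝ), b)).2 a :=
      hGsym y hy _ _
    have hp2 : gY y b (Γ (r, y) ((0:ℝ), a) ((0:ℝ), b)).2
        = gY y (Γ (r, y) ((0:ℝ), a) ((0:ℝ), b)).2 b :=
      hGsym y hy _ _
    have hq1 := hΓpair (r, y) hpmem ((0:ℝ), b) ((0:ℝ), b) a
    have hq2 := hΓpair (r, y) hpmem ((0:ℝ), a) ((0:ℝ), b) b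
    simp only [] at hq1 hq2
    rw [hp1, hp2, hq1, hq2, hDGsym b a]
    simp only []
    field_simp
    ring
  -- the numerator of the sectional curvature
  have hNum : warpedMetric ξ ρ gY (r, y) (curvOf Γ (r, y) (k₁, a) (k₂, b) (k₂, b)) (k₁, a)
      = ξ r * Kradial ξ ρ r
          * (ρ r ^ 2 * (k₁ * k₁ * gY y b b - 2 * (k₁ * k₂) * gY y a b + k₂ * k₂ * gY y a a))
        + ρ r ^ 2 * gY y (curvOf Γ (r, y) ((0:ℝ), a) ((0:ℝ), b) ((0:ℝ), b)).2 a := by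
    rw [hkey]
    simp only [warpedMetric, Prod.fst_add, Prod.snd_add]
    rw [hZ, gadd1 y hy, gadd1 y hy, gsmul1 y hy, gsmul1 y hy, hba]
    ring
  -- the squared norm of k₂ • a - k₁ • b
  have hW : warpedMetric ξ ρ gY (r, y) ((0:ℝ), k₂ • a - k₁ • b) ((0:ℝ), k₂ • a - k₁ • b)
      = ρ r ^ 2 * (k₁ * k₁ * gY y b b - 2 * (k₁ * k₂) * gY y a b + k₂ * k₂ * gY y a a) := by
    have hexp : gY y (k₂ • a - k₁ • b) (k₂ • a - k₁ • b)
        = k₁ * k₁ * gY y b b - 2 * (k₁ * k₂) * gY y a b + k₂ * k₂ * gY y a a := by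
      rw [gsub1 y hy, gsmul1 y hy, gsmul1 y hy,
        (hGlin y hy a).map_sub, (hGlin y hy a).map_smul, (hGlin y hy a).map_smul,
        (hGlin y hy b).map_sub, (hGlin y hy b).map_smul, (hGlin y hy b).map_smul]
      simp only [smul_eq_mul]
      rw [hba]
      ring
    simp only [warpedMetric]
    rw [hexp]
    ring
  -- the denominator identity
  have hDen : warpedMetric ξ ρ gY (r, y) (k₁, a) (k₁, a)
        * warpedMetric ξ ρ gY (r, y) (k₂, b) (k₂, b)
        - warpedMetric ξ ρ gY (r, y) (k₁, a) (k₂, b) ^ 2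
      = ξ r * warpedMetric ξ ρ gY (r, y) ((0:ℝ), k₂ • a - k₁ • b) ((0:ℝ), k₂ • a - k₁ • b)
        + (warpedMetric ξ ρ gY (r, y) ((0:ℝ), a) ((0:ℝ), a)
            * warpedMetric ξ ρ gY (r, y) ((0:ℝ), b) ((0:ℝ), b)
            - warpedMetric ξ ρ gY (r, y) ((0:ℝ), a) ((0:ℝ), b) ^ 2) := by
    rw [hW]
    simp only [warpedMetric]
    ring
  -- the fibre numerator
  have hNumf : warpedMetric ξ ρ gY (r, y)
        (curvOf Γ (r, y) ((0:ℝ), a) ((0:ℝ), b) ((0:ℝ), b)) ((0:ℝ), a)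
      = ρ r ^ 2 * gY y (curvOf Γ (r, y) ((0:ℝ), a) ((0:ℝ), b) ((0:ℝ), b)).2 a := by
    simp only [warpedMetric]
    ring
  constructor
  · -- case 1 : a, b linearly independent
    intro _hliab hndf
    simp only [sectionalOf]
    rw [hNumf, div_mul_cancel₀ _ hndf, hNum, hDen, hW]
    congr 1
    ring
  · -- case 2 : a, b linearly dependent
    intro hdep
    -- curvature of degenerate fibre planes vanishes
    have hzero1 : ∀ x : ℝ × F, Γ (r, y) x (0 : ℝ × F) = 0 := fun x =>
      (hΓlin (r, y) hpmem x).map_zero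
    have hcurvR : ∀ (u : ℝ × F) (c : ℝ), curvOf Γ (r, y) u (c • u) (c • u) = 0 := by
      intro u c
      have hD := hΓdiff u u
      have p3 : ∀ z ∈ I ×ˢ Y, ∀ x, Γ z (c • u) x = c • Γ z u x := by
        intro z hz x
        rw [hΓsymm z hz (c • u) x, (hΓlin z hz x).map_smul, hΓsymm z hz x u]
      have e1 : (fun z => Γ z (c • u) (c • u)) =ᶠ[𝓝 ((r, y) : ℝ × F)]
          (fun z => (c * c) • Γ z u u) := by
        filter_upwards [hmemU] with z hz
        rw [(hΓlin z hz (c • u)).map_smul, p3 z hz u, smul_smul]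
      have e2 : (fun z => Γ z u (c • u)) =ᶠ[𝓝 ((r, y) : ℝ × F)]
          (fun z => c • Γ z u u) := by
        filter_upwards [hmemU] with z hz
        rw [(hΓlin z hz u).map_smul]
      have p1 : Γ (r, y) (c • u) (c • u) = (c * c) • Γ (r, y) u u := by
        rw [(hΓlin (r, y) hpmem (c • u)).map_smul, p3 (r, y) hpmem u, smul_smul]
      have p2 : Γ (r, y) u (c • u) = c • Γ (r, y) u u :=
        (hΓlin (r, y) hpmem u).map_smul c u
      simp only [curvOf]
      rw [e1.fderiv_eq, e2.fderiv_eq, fderiv_fun_const_smul hD, fderiv_fun_const_smul hD,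
        p1, p2, (hΓlin (r, y) hpmem u).map_smul, p3 (r, y) hpmem, (hΓlin (r, y) hpmem u).map_smul]
      simp only [ContinuousLinearMap.smul_apply, ContinuousLinearMap.map_smul, smul_smul]
      module
    have hcurvL : ∀ (v : ℝ × F) (c : ℝ), curvOf Γ (r, y) (c • v) v v = 0 := by
      intro v c
      have hD := hΓdiff v v
      have p3 : ∀ z ∈ I ×ˢ Y, ∀ x, Γ z (c • v) x = c • Γ z v x := by
        intro z hz x
        rw [hΓsymm z hz (c • v) x, (hΓlin z hz x).map_smul, hΓsymm z hz x v]
      have e1 : (fun z => Γ z (c • v) v) =ᶠ[𝓝 ((r, y) : ℝ × F)]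
          (fun z => c • Γ z v v) := by
        filter_upwards [hmemU] with z hz
        exact p3 z hz v
      simp only [curvOf]
      rw [e1.fderiv_eq, fderiv_fun_const_smul hD, p3 (r, y) hpmem v,
        p3 (r, y) hpmem (Γ (r, y) v v), (hΓlin (r, y) hpmem v).map_smul]
      simp only [ContinuousLinearMap.smul_apply, ContinuousLinearMap.map_smul, smul_smul]
      module
    have hg0b : gY y (0 : F) b = 0 := by
      rw [hGsym y hy]
      exact (hGlin y hy b).map_zero
    have hg0a : gY y (0 : F) a = 0 := by
      rw [hGsym y hy]
      exact (hGlin y hy a).map_zero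
    -- dependence: get both the vanishing curvature and the degenerate fibre plane
    rw [LinearIndependent.pair_iff] at hdep
    push_neg at hdep
    obtain ⟨s, t, hst, hne⟩ := hdep
    have hmain : curvOf Γ (r, y) ((0:ℝ), a) ((0:ℝ), b) ((0:ℝ), b) = 0
        ∧ warpedMetric ξ ρ gY (r, y) ((0:ℝ), a) ((0:ℝ), a)
            * warpedMetric ξ ρ gY (r, y) ((0:ℝ), b) ((0:ℝ), b)
            - warpedMetric ξ ρ gY (r, y) ((0:ℝ), a) ((0:ℝ), b) ^ 2 = 0 := by
      rcases eq_or_ne t 0 with ht | ht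
      · have hs : s ≠ 0 := fun h0 => hne h0 ht
        have ha : a = 0 := by
          rw [ht, zero_smul, add_zero] at hst
          exact (smul_eq_zero.mp hst).resolve_left hs
        subst ha
        constructor
        · have h0 : (((0:ℝ), (0:F)) : ℝ × F) = (0 : ℝ × F) := rfl
          have := hcurvL ((0:ℝ), b) 0
          rw [zero_smul] at this
          rw [h0]
          exact this
        · simp only [warpedMetric]
          rw [hg0b]
          rw [show gY y (0:F) (0:F) = 0 from (hGlin y hy (0:F)).map_zero]
          ring
      · have hb : b = (-(s / t)) • a := by
          have h1 : t • b = (-s) • a := by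
            rw [neg_smul]
            exact eq_neg_of_add_eq_zero_right hst
          have h2 : b = t⁻¹ • ((-s) • a) := by
            rw [← h1, inv_smul_smul₀ ht]
          rw [h2, smul_smul]
          congr 1
          field_simp
        constructor
        · have hba' : (((0:ℝ), b) : ℝ × F) = (-(s / t)) • (((0:ℝ), a) : ℝ × F) := by
            rw [hb]
            simp
          rw [hba']
          exact hcurvR _ _
        · simp only [warpedMetric]
          rw [hb, (hGlin y hy a).map_smul, gsmul1 y hy, (hGlin y hy a).map_smul]
          simp only [smul_eq_mul]
          ring
    obtain ⟨hcv, hΔ0⟩ := hmain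
    simp only [sectionalOf]
    rw [hNum, hcv, hDen, hΔ0, hW]
    have hne2 : ξ r * (ρ r ^ 2 * (k₁ * k₁ * gY y b b - 2 * (k₁ * k₂) * gY y a b
        + k₂ * k₂ * gY y a a)) ≠ 0 := by
      intro h0
      apply hnd
      rw [hDen, hΔ0, hW, h0, add_zero]
    rw [show (0 : ℝ × F).2 = (0 : F) from rfl, hg0a]
    rw [show ξ r * Kradial ξ ρ r * (ρ r ^ 2 * (k₁ * k₁ * gY y b b - 2 * (k₁ * k₂) * gY y a b
        + k₂ * k₂ * gY y a a)) + ρ r ^ 2 * 0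
      = Kradial ξ ρ r * (ξ r * (ρ r ^ 2 * (k₁ * k₁ * gY y b b - 2 * (k₁ * k₂) * gY y a b
        + k₂ * k₂ * gY y a a))) by ring, add_zero, mul_div_assoc, div_self hne2, mul_one]
end
end

section
/- Suppose g = g(w(kC, C₁, C₂, ·)) = (k w(r)/r²)dr² + w(r)g_Y on ℝ_{>0} × Y, with (kC, C₁, C₂) ∈ Δ₁ ∪ Δ₂ ∪ Δ₃, is definite (i.e., positive or negative definite). Then K^g ≥ C when K^{g_Y} ≥ C₁/k, and K^g ≤ C when K^{g_Y} ≤ C₁/k. Furthermore, K^g is identically equal to C if and only if K^{g_Y} is identically equal to C₁/k. -/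
/-! STATEMENT 7: curvature bounds for definite metrics g(w(kC,C₁,C₂,·)). -/

noncomputable section

open Real Set Filter Topology

variable {E : Type*} [NormedAddCommGroup E] [NormedSpace ℝ E]

variable {F : Type*} [NormedAddCommGroup F] [NormedSpace ℝ F]

/-- `Δ₁ ∪ Δ₂ ∪ Δ₃` from Definition 2.10 of the paper:
`Δ₁ = {s > 0, C₁ > 0}`, `Δ₂ = {s = 0, C₁ ≥ 0}`, `Δ₃ = {s < 0, C₁ ≤ 0}`. -/
def DeltaSet : Set (ℝ × ℝ × ℝ) :=
  {p | (0 < p.1 ∧ 0 < p.2.1) ∨ (p.1 = 0 ∧ 0 ≤ p.2.1) ∨ (p.1 < 0 ∧ p.2.1 ≤ 0)}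

/-- The function `w(s, C₁, C₂, r)` of Definition 2.10; the parameter `ε = ±1`
records the sign choice `r^{± 2√C₁}` occurring in the case `s = 0`. -/
noncomputable def wFam (ε s C₁ C₂ r : ℝ) : ℝ :=
  if 0 < s then C₁ / (s * Real.cosh (Real.sqrt C₁ * (Real.log r + C₂)) ^ 2)
  else if s = 0 then Real.exp C₂ * r ^ (ε * (2 * Real.sqrt C₁))
  else if C₁ < 0 then C₁ / (s * Real.sin (Real.sqrt (-C₁) * (Real.log r + C₂)) ^ 2)
  else -1 / (s * (Real.log r + C₂) ^ 2)

section helpers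
variable {V : Type*} [AddCommGroup V] [Module ℝ V]

lemma pair_ne_zero {A B : V} (h : LinearIndependent ℝ ![A, B]) : B ≠ 0 := by
  intro h0
  have := (LinearIndependent.pair_iff.mp h 0 1 (by simp [h0])).2
  norm_num at this

lemma pair_sub_ne_zero {A B : V} (h : LinearIndependent ℝ ![A, B]) (t : ℝ) :
    A - t • B ≠ 0 := by
  intro h0
  have := (LinearIndependent.pair_iff.mp h 1 (-t)
    (by rw [neg_smul, one_smul, ← sub_eq_add_neg]; exact h0)).1
  norm_num at this

/-- Strict Cauchy–Schwarz for a positive definite symmetric bilinear form. -/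
lemma cs_pos (g : V → V → ℝ) (hsym : ∀ u v, g u v = g v u)
    (hlin : ∀ u, IsLinearMap ℝ (g u))
    (hpos : ∀ u, u ≠ 0 → 0 < g u u) {A B : V} (h : LinearIndependent ℝ ![A, B]) :
    0 < g A A * g B B - g A B ^ 2 := by
  have hBB : 0 < g B B := hpos B (pair_ne_zero h)
  set t : ℝ := g A B / g B B with ht
  have hX := hpos _ (pair_sub_ne_zero h t)
  have hexp : g (A - t • B) (A - t • B)
      = g A A - 2 * t * g A B + t ^ 2 * g B B := by
    rw [hsym (A - t • B) (A - t • B), (hlin (A - t•B)).map_sub, (hlin (A - t•B)).map_smul,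
      hsym (A - t•B) A, hsym (A - t•B) B, (hlin A).map_sub, (hlin A).map_smul,
      (hlin B).map_sub, (hlin B).map_smul, hsym B A]
    simp only [smul_eq_mul]
    ring
  rw [hexp] at hX
  have h2 : g A A * g B B - g A B ^ 2
      = (g A A - 2 * t * g A B + t ^ 2 * g B B) * g B B := by
    rw [ht]; field_simp; ring
  rw [h2]
  exact mul_pos hX hBB

lemma dep_cases {u v : V} (h : ¬ LinearIndependent ℝ ![u, v]) :
    (∃ c : ℝ, u = c • v) ∨ (∃ c : ℝ, v = c • u) := by
  by_cases hv : v = 0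
  · exact Or.inr ⟨0, by simp [hv]⟩
  · rw [linearIndependent_fin2] at h
    push_neg at h
    obtain ⟨a, ha⟩ := h (by simpa using hv)
    exact Or.inl ⟨a, ha.symm⟩

lemma dep_disc_zero (g : V → V → ℝ) (hsym : ∀ u v, g u v = g v u)
    (hlin : ∀ u, IsLinearMap ℝ (g u)) {u v : V} (h : ¬ LinearIndependent ℝ ![u, v]) :
    g u u * g v v - g u v ^ 2 = 0 := by
  have hs1 : ∀ (c : ℝ) (z t : V), g (c • z) t = c * g z t := by
    intro c z t
    rw [hsym, (hlin t).map_smul, smul_eq_mul, hsym t z]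
  have hs2 : ∀ (c : ℝ) (z t : V), g z (c • t) = c * g z t := by
    intro c z t
    rw [(hlin z).map_smul]
    simp
  rcases dep_cases h with ⟨c, rfl⟩ | ⟨c, rfl⟩ <;>
    simp only [hs1, hs2] <;> ring
end helpers

section curvdep
variable {V : Type*} [NormedAddCommGroup V] [NormedSpace ℝ V]

lemma curv_dep_zero (Y : Set V) (hY : IsOpen Y) (ΓY : V → V → V → V)
    (hsym : ∀ x ∈ Y, ∀ u v, ΓY x u v = ΓY x v u)
    (hlin : ∀ x ∈ Y, ∀ u, IsLinearMap ℝ (ΓY x u))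
    (hsm : ∀ u v : V, ∀ x ∈ Y, DifferentiableAt ℝ (fun t => ΓY t u v) x)
    (y : V) (hy : y ∈ Y) (u v : V) (h : ¬ LinearIndependent ℝ ![u, v]) :
    curvOf ΓY y u v v = 0 := by
  have hev : ∀ (c : ℝ) (z t : V), (fun x => ΓY x (c • z) t) =ᶠ[𝓝 y] (fun x => c • ΓY x z t) := by
    intro c z t
    filter_upwards [hY.mem_nhds hy] with x hx
    rw [hsym x hx, (hlin x hx t).map_smul, hsym x hx t z]
  have hl1 : ∀ (c : ℝ) (z t : V), ΓY y (c • z) t = c • ΓY y z t := by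
    intro c z t
    rw [hsym y hy, (hlin y hy t).map_smul, hsym y hy t z]
  rcases dep_cases h with ⟨c, rfl⟩ | ⟨c, rfl⟩
  · unfold curvOf
    have e : ΓY y (c • v) v = c • ΓY y v v := hl1 c v v
    have e2 : ΓY y (c • v) (ΓY y v v) = c • ΓY y v (ΓY y v v) := hl1 c v _
    rw [(hev c v v).fderiv_eq, fderiv_fun_const_smul (hsm v v y hy) c, e2, e,
      (hlin y hy v).map_smul, ContinuousLinearMap.map_smul]
    simp only [ContinuousLinearMap.smul_apply]
    abel
  · unfold curvOf
    have h1 : (fun x => ΓY x (c • u) (c • u)) =ᶠ[𝓝 y] (fun x => (c * c) • ΓY x u u) := by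
      filter_upwards [hY.mem_nhds hy] with x hx
      rw [(hlin x hx (c • u)).map_smul, hsym x hx (c • u) u, (hlin x hx u).map_smul,
        hsym x hx u u, smul_smul]
    have h2 : (fun x => ΓY x u (c • u)) =ᶠ[𝓝 y] (fun x => c • ΓY x u u) := by
      filter_upwards [hY.mem_nhds hy] with x hx
      exact (hlin x hx u).map_smul c u
    have e1 : ΓY y (c • u) (c • u) = (c * c) • ΓY y u u := by
      rw [(hlin y hy (c • u)).map_smul, hl1, smul_smul]
    have e2 : ΓY y u (c • u) = c • ΓY y u u := (hlin y hy u).map_smul c u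
    rw [h1.fderiv_eq, fderiv_fun_const_smul (hsm u u y hy) (c * c), h2.fderiv_eq,
      fderiv_fun_const_smul (hsm u u y hy) c, ContinuousLinearMap.map_smul, e1, e2,
      (hlin y hy u).map_smul, (hlin y hy (c • u)).map_smul, hl1]
    simp only [ContinuousLinearMap.smul_apply, smul_smul]
    abel
end curvdep

lemma delta3_absurd (ε s C₁ C₂ : ℝ) (hs : s < 0)
    (hwpos : ∀ r > (0:ℝ), 0 < wFam ε s C₁ C₂ r) : False := by
  have hr : (0:ℝ) < Real.exp (-C₂) := Real.exp_pos _
  have hlog : Real.log (Real.exp (-C₂)) + C₂ = 0 := by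
    rw [Real.log_exp]; ring
  have h := hwpos _ hr
  unfold wFam at h
  rw [if_neg (by linarith), if_neg (by linarith)] at h
  by_cases hC : C₁ < 0
  · rw [if_pos hC, hlog] at h
    simp at h
  · rw [if_neg hC, hlog] at h
    simp at h

lemma delta2_facts (ε C₁ C₂ : ℝ) (hε : ε = 1 ∨ ε = -1) (hC₁ : 0 ≤ C₁) :
    ∃ w₁ w₂ : ℝ → ℝ,
      (∀ r ∈ Ioi (0:ℝ), HasDerivAt (wFam ε 0 C₁ C₂) (w₁ r) r) ∧
      (∀ r ∈ Ioi (0:ℝ), HasDerivAt w₁ (w₂ r) r) ∧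
      (∀ r ∈ Ioi (0:ℝ), r^2 * (w₁ r)^2 = 4 * (wFam ε 0 C₁ C₂ r)^2 * (C₁ - 0 * wFam ε 0 C₁ C₂ r)) ∧
      (∀ r ∈ Ioi (0:ℝ), r^2 * w₂ r * wFam ε 0 C₁ C₂ r - r^2 * (w₁ r)^2
          + r * w₁ r * wFam ε 0 C₁ C₂ r + 2 * 0 * (wFam ε 0 C₁ C₂ r)^3 = 0) := by
  set q : ℝ := ε * (2 * Real.sqrt C₁) with hq
  have hq2 : q^2 = 4 * C₁ := by
    rcases hε with h | h <;> rw [hq, h, mul_pow, mul_pow, Real.sq_sqrt hC₁] <;> norm_num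
  have hw : ∀ r > (0:ℝ), wFam ε 0 C₁ C₂ r = Real.exp C₂ * r ^ q := by
    intro r hr; unfold wFam; rw [if_neg (lt_irrefl 0), if_pos rfl]
  refine ⟨fun r => Real.exp C₂ * (q * r ^ (q-1)), fun r => Real.exp C₂ * (q * ((q-1) * r ^ (q-2))), ?_, ?_, ?_, ?_⟩
  · intro r hr
    have hr0 : (r:ℝ) ≠ 0 := ne_of_gt hr
    have h1 : HasDerivAt (fun x : ℝ => x ^ q) (q * r ^ (q-1)) r :=
      Real.hasDerivAt_rpow_const (Or.inl hr0)
    refine HasDerivAt.congr_of_eventuallyEq (h1.const_mul (Real.exp C₂)) ?_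
    filter_upwards [eventually_gt_nhds hr] with x hx
    exact hw x hx
  · intro r hr
    have hr0 : (r:ℝ) ≠ 0 := ne_of_gt hr
    have h1 : HasDerivAt (fun x : ℝ => x ^ (q-1)) ((q-1) * r ^ (q-1-1)) r :=
      Real.hasDerivAt_rpow_const (Or.inl hr0)
    have e : q - 1 - 1 = q - 2 := by ring
    rw [e] at h1
    exact (h1.const_mul q).const_mul (Real.exp C₂)
  · intro r hr
    have hr' : (0:ℝ) < r := hr
    have hr0 : (r:ℝ) ≠ 0 := ne_of_gt hr'
    rw [hw r hr']
    have e1 : r ^ (q-1) = r ^ q / r := by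
      rw [Real.rpow_sub hr', Real.rpow_one]
    beta_reduce
    rw [e1]
    field_simp
    linear_combination hq2
  · intro r hr
    have hr' : (0:ℝ) < r := hr
    have hr0 : (r:ℝ) ≠ 0 := ne_of_gt hr'
    rw [hw r hr']
    have e1 : r ^ (q-1) = r ^ q / r := by
      rw [Real.rpow_sub hr', Real.rpow_one]
    have e2 : r ^ (q-2) = r ^ q / r^2 := by
      rw [Real.rpow_sub hr', show (2:ℝ) = ((2:ℕ):ℝ) by norm_num, Real.rpow_natCast]
    beta_reduce
    rw [e1, e2]
    field_simp
    ring

lemma delta1_facts (ε s C₁ C₂ : ℝ) (hs : 0 < s) (hC₁ : 0 < C₁) :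
    ∃ w₁ w₂ : ℝ → ℝ,
      (∀ r ∈ Ioi (0:ℝ), HasDerivAt (wFam ε s C₁ C₂) (w₁ r) r) ∧
      (∀ r ∈ Ioi (0:ℝ), HasDerivAt w₁ (w₂ r) r) ∧
      (∀ r ∈ Ioi (0:ℝ), r^2 * (w₁ r)^2 = 4 * (wFam ε s C₁ C₂ r)^2 * (C₁ - s * wFam ε s C₁ C₂ r)) ∧
      (∀ r ∈ Ioi (0:ℝ), r^2 * w₂ r * wFam ε s C₁ C₂ r - r^2 * (w₁ r)^2
          + r * w₁ r * wFam ε s C₁ C₂ r + 2 * s * (wFam ε s C₁ C₂ r)^3 = 0) := by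
  set c : ℝ := Real.sqrt C₁ with hc
  have hc2 : c^2 = C₁ := Real.sq_sqrt hC₁.le
  set L : ℝ → ℝ := fun r => c * (Real.log r + C₂) with hL
  have hwEq : wFam ε s C₁ C₂ = fun r => C₁ / (s * Real.cosh (L r) ^ 2) := by
    funext r; unfold wFam; rw [if_pos hs]
  have hs0 : s ≠ 0 := ne_of_gt hs
  have hLd : ∀ r ∈ Ioi (0:ℝ), HasDerivAt L (c * r⁻¹) r := fun r hr =>
    ((Real.hasDerivAt_log (ne_of_gt hr)).add_const C₂).const_mul c
  have hchpos : ∀ x : ℝ, Real.cosh x ≠ 0 := fun x => (Real.cosh_pos x).ne'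
  -- first derivative
  refine ⟨fun r => -2*c*C₁*Real.sinh (L r) / (s * r * Real.cosh (L r)^3),
    fun r => ((-2*c*C₁ * (Real.cosh (L r) * (c * r⁻¹))) * (s * (r * Real.cosh (L r)^3))
      - (-2*c*C₁*Real.sinh (L r)) * (s * (1 * Real.cosh (L r)^3
          + r * (3 * Real.cosh (L r)^2 * (Real.sinh (L r) * (c * r⁻¹))))))
      / (s * (r * Real.cosh (L r)^3))^2, ?_, ?_, ?_, ?_⟩
  · intro r hr
    have hr0 : (r:ℝ) ≠ 0 := ne_of_gt hr
    have hch : HasDerivAt (fun x => Real.cosh (L x)) (Real.sinh (L r) * (c * r⁻¹)) r :=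
      (Real.hasDerivAt_cosh (L r)).comp r (hLd r hr)
    have hden : HasDerivAt (fun x => s * Real.cosh (L x)^2)
        (s * (2 * Real.cosh (L r)^1 * (Real.sinh (L r) * (c * r⁻¹)))) r := by
      have := (hch.pow 2).const_mul s
      exact this.congr_deriv (by push_cast; ring)
    have h := (hasDerivAt_const r C₁).div hden (by positivity)
    rw [hwEq]
    refine h.congr_deriv ?_
    have : Real.cosh (L r) ≠ 0 := hchpos _
    field_simp
    ring
  · intro r hr
    have hr0 : (r:ℝ) ≠ 0 := ne_of_gt hr
    have hch : HasDerivAt (fun x => Real.cosh (L x)) (Real.sinh (L r) * (c * r⁻¹)) r :=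
      (Real.hasDerivAt_cosh (L r)).comp r (hLd r hr)
    have hsh : HasDerivAt (fun x => Real.sinh (L x)) (Real.cosh (L r) * (c * r⁻¹)) r :=
      (Real.hasDerivAt_sinh (L r)).comp r (hLd r hr)
    have hN : HasDerivAt (fun x => -2*c*C₁*Real.sinh (L x)) (-2*c*C₁ * (Real.cosh (L r) * (c * r⁻¹))) r := by
      have := hsh.const_mul (-2*c*C₁); convert this using 1 <;> ring
    have hch3 : HasDerivAt (fun x => Real.cosh (L x)^3)
        (3 * Real.cosh (L r)^2 * (Real.sinh (L r) * (c * r⁻¹))) r := by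
      have := hch.pow 3; exact this.congr_deriv (by push_cast; ring)
    have hD : HasDerivAt (fun x => s * (x * Real.cosh (L x)^3))
        (s * (1 * Real.cosh (L r)^3 + r * (3 * Real.cosh (L r)^2 * (Real.sinh (L r) * (c * r⁻¹))))) r :=
      ((hasDerivAt_id r).mul hch3).const_mul s
    have hD0 : s * (r * Real.cosh (L r)^3) ≠ 0 := by
      have := hchpos (L r); positivity
    have h := hN.div hD hD0
    refine h.congr_of_eventuallyEq (Filter.Eventually.of_forall fun x => ?_)
    simp only [Pi.div_apply]
    ring
  · intro r hr
    have hr0 : (r:ℝ) ≠ 0 := ne_of_gt hr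
    have hch0 : Real.cosh (L r) ≠ 0 := hchpos _
    have hS2 : Real.sinh (c * Real.log r + c * C₂)^2 = Real.cosh (c * Real.log r + c * C₂)^2 - 1 := by
      have := Real.cosh_sq_sub_sinh_sq (c * Real.log r + c * C₂); linarith
    rw [hwEq]
    beta_reduce
    field_simp
    ring_nf
    linear_combination (4*Real.sinh (L r)^2) * hc2 - 4*C₁*Real.cosh_sq_sub_sinh_sq (L r)
  · intro r hr
    have hr0 : (r:ℝ) ≠ 0 := ne_of_gt hr
    have hch0 : Real.cosh (L r) ≠ 0 := hchpos _
    have hS2 : Real.sinh (c * Real.log r + c * C₂)^2 = Real.cosh (c * Real.log r + c * C₂)^2 - 1 := by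
      have := Real.cosh_sq_sub_sinh_sq (c * Real.log r + c * C₂); linarith
    rw [hwEq]
    beta_reduce
    field_simp
    ring_nf
    linear_combination (-2*C₁^2*c^2)*Real.cosh_sq_sub_sinh_sq (L r) - 2*C₁^2*hc2

/-! auxiliary definitions for the Levi-Civita connection of the warped metric -/

noncomputable def thetaF (w w₁ : ℝ → ℝ) : ℝ → ℝ := fun x => w₁ x / (2 * w x)
noncomputable def psiF (k : ℝ) (w w₁ : ℝ → ℝ) : ℝ → ℝ := fun x => x^2 * w₁ x / (2*(k * w x))
noncomputable def phiF (w w₁ : ℝ → ℝ) : ℝ → ℝ := fun x => thetaF w w₁ x - 1/x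

noncomputable def Gam0 (k : ℝ) (w w₁ : ℝ → ℝ) (gY : F → F → F → ℝ) (ΓY : F → F → F → F) :
    ℝ × F → ℝ × F → ℝ × F → ℝ × F := fun p A B =>
  (phiF w w₁ p.1 * A.1 * B.1 - psiF k w w₁ p.1 * gY p.2 A.2 B.2,
   (thetaF w w₁ p.1 * A.1) • B.2 + (thetaF w w₁ p.1 * B.1) • A.2 + ΓY p.2 A.2 B.2)

noncomputable def gw (k : ℝ) (w : ℝ → ℝ) (gY : F → F → F → ℝ) :
    ℝ × F → ℝ × F → ℝ × F → ℝ :=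
  fun p A B => (k * w p.1 / p.1^2) * A.1 * B.1 + w p.1 * gY p.2 A.2 B.2

set_option maxHeartbeats 2000000 in
theorem warped_core
    (Y : Set F) (hYopen : IsOpen Y)
    (gY : F → F → F → ℝ) (hgY : IsPseudoMetricOn Y gY)
    (hgYsm : ∀ u v, ContDiffOn ℝ (⊤ : ℕ∞) (fun y => gY y u v) Y)
    (ΓY : F → F → F → F) (hΓY : IsLeviCivitaOn Y gY ΓY)
    (hΓYsm : ∀ u v, ContDiffOn ℝ (⊤ : ℕ∞) (fun y => ΓY y u v) Y)
    (k : ℝ) (hk : k ≠ 0) (C C₁ : ℝ) (w w₁ w₂ : ℝ → ℝ)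
    (hwd : ∀ r ∈ Ioi (0:ℝ), HasDerivAt w (w₁ r) r)
    (hwd1 : ∀ r ∈ Ioi (0:ℝ), HasDerivAt w₁ (w₂ r) r)
    (hwpos : ∀ r ∈ Ioi (0:ℝ), 0 < w r)
    (hE1 : ∀ r ∈ Ioi (0:ℝ), r^2*(w₁ r)^2 = 4*(w r)^2*(C₁ - (k*C)*w r))
    (hE2 : ∀ r ∈ Ioi (0:ℝ), r^2*w₂ r*w r - r^2*(w₁ r)^2 + r*w₁ r*w r + 2*(k*C)*(w r)^3 = 0)
    (Γ : ℝ × F → ℝ × F → ℝ × F → ℝ × F)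
    (hΓ : IsLeviCivitaOn (Ioi 0 ×ˢ Y)
      (warpedMetric (fun s => k * w s / s ^ 2) (fun s => Real.sqrt (w s)) gY) Γ)
    (hnd : ∀ p ∈ (Ioi 0 ×ˢ Y : Set (ℝ × F)), ∀ u : ℝ × F,
        (∀ v, warpedMetric (fun s => k * w s / s ^ 2) (fun s => Real.sqrt (w s)) gY p u v = 0)
          → u = 0)
    (r : ℝ) (hr : r ∈ Ioi (0:ℝ)) (y : F) (hy : y ∈ Y) (A B : ℝ × F) :
    warpedMetric (fun s => k * w s / s ^ 2) (fun s => Real.sqrt (w s)) gY (r, y)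
        (curvOf Γ (r, y) A B B) A
      = C * (warpedMetric (fun s => k * w s / s ^ 2) (fun s => Real.sqrt (w s)) gY (r,y) A A
              * warpedMetric (fun s => k * w s / s ^ 2) (fun s => Real.sqrt (w s)) gY (r,y) B B
            - warpedMetric (fun s => k * w s / s ^ 2) (fun s => Real.sqrt (w s)) gY (r,y) A B ^ 2)
        + w r * (gY y (curvOf ΓY y A.2 B.2 B.2) A.2
            - C₁/k * (gY y A.2 A.2 * gY y B.2 B.2 - gY y A.2 B.2 ^ 2)) := by
  classical
  set G := warpedMetric (fun s => k * w s / s ^ 2) (fun s => Real.sqrt (w s)) gY with hGdef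
  set U : Set (ℝ × F) := Ioi 0 ×ˢ Y with hUdef
  have hUopen : IsOpen U := isOpen_Ioi.prod hYopen
  -- the metric in `gw` form
  have hGeq : ∀ p ∈ U, ∀ A B : ℝ × F, G p A B = gw k w gY p A B := by
    intro p hp A B
    have hw0 : 0 ≤ w p.1 := (hwpos p.1 hp.1).le
    simp only [hGdef, warpedMetric, gw, Real.sq_sqrt hw0]
  -- the metric as functions agree near any p ∈ U
  have hGev : ∀ p ∈ U, ∀ V W' : ℝ × F,
      (fun z => G z V W') =ᶠ[𝓝 p] (fun z => gw k w gY z V W') := by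
    intro p hp V W'
    have h1 : ∀ᶠ z : ℝ × F in 𝓝 p, 0 < z.1 :=
      (isOpen_lt continuous_const continuous_fst).eventually_mem (x := p) hp.1
    filter_upwards [h1] with z hz
    have hw0 : 0 ≤ w z.1 := (hwpos z.1 hz).le
    simp only [hGdef, warpedMetric, gw, Real.sq_sqrt hw0]
  have hgYsym : ∀ x ∈ Y, ∀ u v, gY x u v = gY x v u := hgY.1
  have hgYlin : ∀ x ∈ Y, ∀ u, IsLinearMap ℝ (gY x u) := hgY.2.1
  have hΓYsym := hΓY.1
  have hΓYlin := hΓY.2.1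
  have hΓYcomp := hΓY.2.2
  have hgYdiff : ∀ (u v : F), ∀ x ∈ Y, DifferentiableAt ℝ (fun t => gY t u v) x := by
    intro u v x hx
    exact ((hgYsm u v).contDiffAt (hYopen.mem_nhds hx)).differentiableAt (by simp)
  have hΓYdiff : ∀ (u v : F), ∀ x ∈ Y, DifferentiableAt ℝ (fun t => ΓY t u v) x := by
    intro u v x hx
    exact ((hΓYsm u v).contDiffAt (hYopen.mem_nhds hx)).differentiableAt (by simp)
  -- derivative of the metric coefficient functions
  have hξd : ∀ x ∈ Ioi (0:ℝ), HasDerivAt (fun s => k * w s / s ^ 2)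
      (k * w₁ x / x^2 - 2 * k * w x / x^3) x := by
    intro x hx
    have hx0 : (x:ℝ) ≠ 0 := ne_of_gt hx
    have h := ((hwd x hx).const_mul k).div (hasDerivAt_pow 2 x) (by positivity)
    refine h.congr_deriv ?_
    field_simp
    ring
  have hθd : ∀ x ∈ Ioi (0:ℝ), HasDerivAt (thetaF w w₁)
      (w₂ x/(2*w x) - (w₁ x)^2/(2*(w x)^2)) x := by
    intro x hx
    have hw0 : w x ≠ 0 := (hwpos x hx).ne'
    have h := (hwd1 x hx).div ((hwd x hx).const_mul 2) (by simpa using hw0)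
    refine h.congr_deriv ?_
    field_simp
  have hψd : ∀ x ∈ Ioi (0:ℝ), HasDerivAt (psiF k w w₁)
      ((2*x*w₁ x + x^2*w₂ x)/(2*(k*w x)) - x^2*(w₁ x)^2/(2*k*(w x)^2)) x := by
    intro x hx
    have hx0 : (x:ℝ) ≠ 0 := ne_of_gt hx
    have hw0 : w x ≠ 0 := (hwpos x hx).ne'
    have hnum : HasDerivAt (fun s : ℝ => s^2 * w₁ s) (2*x*w₁ x + x^2*w₂ x) x := by
      have h := (hasDerivAt_pow 2 x).mul (hwd1 x hx)
      refine h.congr_deriv ?_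
      push_cast
      ring
    have h := hnum.div (((hwd x hx).const_mul k).const_mul 2) (by simp [hw0, hk])
    refine h.congr_deriv ?_
    field_simp
  have hφd : ∀ x ∈ Ioi (0:ℝ), HasDerivAt (phiF w w₁)
      ((w₂ x/(2*w x) - (w₁ x)^2/(2*(w x)^2)) + 1/x^2) x := by
    intro x hx
    have hx0 : (x:ℝ) ≠ 0 := ne_of_gt hx
    have h := (hθd x hx).sub ((hasDerivAt_inv hx0))
    have e : -(x^2)⁻¹ = -(1/x^2) := by field_simp
    unfold phiF
    simp only [one_div]
    exact h.congr_deriv (by ring)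
  -- the derivative of the metric in chart directions
  have hgwfd : ∀ p ∈ U, ∀ (V W' D : ℝ × F),
      fderiv ℝ (fun z => gw k w gY z V W') p D
        = (k * w₁ p.1 / p.1^2 - 2 * k * w p.1 / p.1^3) * D.1 * (V.1 * W'.1)
          + w₁ p.1 * D.1 * gY p.2 V.2 W'.2
          + w p.1 * (fderiv ℝ (fun t => gY t V.2 W'.2) p.2 D.2) := by
    intro p hp V W' D
    have hx : p.1 ∈ Ioi (0:ℝ) := hp.1
    have hy' : p.2 ∈ Y := hp.2
    have hA : HasFDerivAt (fun z : ℝ × F => k * w z.1 / z.1 ^ 2)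
        ((k * w₁ p.1 / p.1^2 - 2 * k * w p.1 / p.1^3) • (ContinuousLinearMap.fst ℝ ℝ F)) p :=
      ((hξd p.1 hx).comp_hasFDerivAt p (hasFDerivAt_fst (p := p)))
    have hB := (hA.mul_const V.1).mul_const W'.1
    have hgy : HasFDerivAt (fun z : ℝ × F => gY z.2 V.2 W'.2)
        ((fderiv ℝ (fun t => gY t V.2 W'.2) p.2).comp (ContinuousLinearMap.snd ℝ ℝ F)) p :=
      ((hgYdiff V.2 W'.2 p.2 hy').hasFDerivAt).comp p (hasFDerivAt_snd (p := p))
    have hwz : HasFDerivAt (fun z : ℝ × F => w z.1)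
        ((w₁ p.1) • (ContinuousLinearMap.fst ℝ ℝ F)) p :=
      ((hwd p.1 hx).comp_hasFDerivAt p (hasFDerivAt_fst (p := p)))
    have htot := hB.add (hwz.mul hgy)
    have hfun : (fun z : ℝ × F => gw k w gY z V W')
        = fun z : ℝ × F => ((k * w z.1 / z.1 ^ 2) * V.1) * W'.1 + w z.1 * gY z.2 V.2 W'.2 := by
      funext z; simp [gw]
    rw [hfun]
    rw [(show HasFDerivAt (fun z : ℝ × F => ((k * w z.1 / z.1 ^ 2) * V.1) * W'.1 + w z.1 * gY z.2 V.2 W'.2) _ p from htot).fderiv]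
    simp only [ContinuousLinearMap.add_apply, ContinuousLinearMap.smul_apply,
      ContinuousLinearMap.comp_apply, ContinuousLinearMap.coe_fst',
      ContinuousLinearMap.coe_snd', smul_eq_mul]
    ring
  -- gY (bi)linearity helpers
  have gYadd2 : ∀ x ∈ Y, ∀ z t s : F, gY x z (t + s) = gY x z t + gY x z s :=
    fun x hx z t s => (hgYlin x hx z).map_add t s
  have gYsmul2 : ∀ x ∈ Y, ∀ (c : ℝ) (z t : F), gY x z (c • t) = c * gY x z t :=
    fun x hx c z t => (hgYlin x hx z).map_smul c t
  have gYsub2 : ∀ x ∈ Y, ∀ z t s : F, gY x z (t - s) = gY x z t - gY x z s :=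
    fun x hx z t s => (hgYlin x hx z).map_sub t s
  have gYadd1 : ∀ x ∈ Y, ∀ z t s : F, gY x (z + t) s = gY x z s + gY x t s := by
    intro x hx z t s
    rw [hgYsym x hx, gYadd2 x hx, hgYsym x hx s z, hgYsym x hx s t]
  have gYsmul1 : ∀ x ∈ Y, ∀ (c : ℝ) (z t : F), gY x (c • z) t = c * gY x z t := by
    intro x hx c z t
    rw [hgYsym x hx, gYsmul2 x hx, hgYsym x hx t z]
  have gYsub1 : ∀ x ∈ Y, ∀ z t s : F, gY x (z - t) s = gY x z s - gY x t s := by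
    intro x hx z t s
    rw [hgYsym x hx, gYsub2 x hx, hgYsym x hx s z, hgYsym x hx s t]
  -- compatibility of the candidate connection `Gam0`
  have h0comp : ∀ p ∈ U, ∀ (A V W' : ℝ × F),
      fderiv ℝ (fun z => G z V W') p A
        = G p (Gam0 k w w₁ gY ΓY p A V) W' + G p V (Gam0 k w w₁ gY ΓY p A W') := by
    intro p hp A V W'
    rw [(hGev p hp V W').fderiv_eq]
    rw [hgwfd p hp V W' A]
    rw [hΓYcomp p.2 hp.2 A.2 V.2 W'.2]
    rw [hGeq p hp, hGeq p hp]
    have hx0 : p.1 ≠ 0 := ne_of_gt hp.1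
    have hw0 : w p.1 ≠ 0 := (hwpos p.1 hp.1).ne'
    simp only [gw, Gam0]
    rw [gYadd1 p.2 hp.2, gYadd1 p.2 hp.2, gYsmul1 p.2 hp.2, gYsmul1 p.2 hp.2,
      gYadd2 p.2 hp.2, gYadd2 p.2 hp.2, gYsmul2 p.2 hp.2, gYsmul2 p.2 hp.2,
      hgYsym p.2 hp.2 V.2 A.2]
    unfold thetaF psiF phiF thetaF
    generalize gY p.2 V.2 W'.2 = q1
    generalize gY p.2 (ΓY p.2 A.2 V.2) W'.2 = q2
    generalize gY p.2 V.2 (ΓY p.2 A.2 W'.2) = q3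
    generalize gY p.2 A.2 V.2 = q4
    generalize gY p.2 A.2 W'.2 = q5
    generalize hq6 : w p.1 = q6
    generalize hq7 : w₁ p.1 = q7
    generalize hq8 : p.1 = x
    rw [hq8] at hx0
    rw [hq6] at hw0
    field_simp
    ring
  -- uniqueness of the Levi-Civita connection: Γ = Gam0 on U
  have hΓeq : ∀ p ∈ U, ∀ A V, Γ p A V = Gam0 k w w₁ gY ΓY p A V := by
    intro p hp
    have hGsym : ∀ X Z, G p X Z = G p Z X := by
      intro X Z
      rw [hGeq p hp, hGeq p hp]
      simp only [gw]
      rw [hgYsym p.2 hp.2]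
      ring
    have hGsub1 : ∀ X Z T, G p (X - Z) T = G p X T - G p Z T := by
      intro X Z T
      rw [hGeq p hp, hGeq p hp, hGeq p hp]
      simp only [gw, Prod.fst_sub, Prod.snd_sub]
      rw [gYsub1 p.2 hp.2]
      ring
    have hΓ0sym : ∀ A V, Gam0 k w w₁ gY ΓY p A V = Gam0 k w w₁ gY ΓY p V A := by
      intro A V
      simp only [Gam0, Prod.mk.injEq]
      constructor
      · rw [hgYsym p.2 hp.2]; ring
      · rw [hΓYsym p.2 hp.2]; abel
    set Γ₀ := Gam0 k w w₁ gY ΓY with hΓ₀def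
    have hT1 : ∀ A V W', G p (Γ p A V - Γ₀ p A V) W' = - G p (Γ p A W' - Γ₀ p A W') V := by
      intro A V W'
      have e1 := hΓ.2.2 p hp A V W'
      have e2 := h0comp p hp A V W'
      rw [e2] at e1
      rw [hGsub1, hGsub1]
      have e3 : G p V (Γ p A W') - G p V (Γ₀ p A W')
          = G p (Γ p A W') V - G p (Γ₀ p A W') V := by rw [hGsym, hGsym V]
      linarith [e1, e3]
    have hT2 : ∀ A V W', G p (Γ p A V - Γ₀ p A V) W' = G p (Γ p V A - Γ₀ p V A) W' := by
      intro A V W'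
      rw [hΓ.1 p hp A V, hΓ0sym A V]
    have hT0 : ∀ A V W', G p (Γ p A V - Γ₀ p A V) W' = 0 := by
      intro A V W'
      have h := hT1 A V W'
      have h2 := hT2 A V W'
      -- chain: T A V W' = -T A W' V = -T W' A V = T W' V A = T V W' A = -T V A W' = -T A V W'
      have c1 : G p (Γ p A V - Γ₀ p A V) W' = - G p (Γ p W' A - Γ₀ p W' A) V := by
        rw [hT1 A V W', hT2 A W' V]
      have c2 : G p (Γ p W' A - Γ₀ p W' A) V = - G p (Γ p W' V - Γ₀ p W' V) A := hT1 W' A V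
      have c3 : G p (Γ p W' V - Γ₀ p W' V) A = G p (Γ p V W' - Γ₀ p V W') A := hT2 W' V A
      have c4 : G p (Γ p V W' - Γ₀ p V W') A = - G p (Γ p V A - Γ₀ p V A) W' := hT1 V W' A
      have c5 : G p (Γ p V A - Γ₀ p V A) W' = G p (Γ p A V - Γ₀ p A V) W' := hT2 V A W'
      linarith [c1, c2, c3, c4, c5]
    intro A V
    have h := hnd p hp (Γ p A V - Gam0 k w w₁ gY ΓY p A V) (fun W' => hT0 A V W')
    exact sub_eq_zero.mp h
  -- from now on work at the point p = (r, y)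
  have hpU : ((r, y) : ℝ × F) ∈ U := ⟨hr, hy⟩
  have hΓev : ∀ V W' : ℝ × F, (fun z => Γ z V W')
      =ᶠ[𝓝 ((r, y) : ℝ × F)] (fun z => Gam0 k w w₁ gY ΓY z V W') := by
    intro V W'
    filter_upwards [hUopen.mem_nhds hpU] with z hz
    exact hΓeq z hz V W'
  have hcurv : curvOf Γ (r, y) A B B = curvOf (Gam0 k w w₁ gY ΓY) (r, y) A B B := by
    unfold curvOf
    rw [(hΓev B B).fderiv_eq, (hΓev A B).fderiv_eq, hΓeq (r,y) hpU B B,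
      hΓeq (r,y) hpU A B, hΓeq (r,y) hpU A _, hΓeq (r,y) hpU B _]
  -- the derivative of `Gam0` at (r, y)
  have hΓ0fd : ∀ (V W' D : ℝ × F),
      fderiv ℝ (fun z => Gam0 k w w₁ gY ΓY z V W') (r, y) D
        = (((w₂ r/(2*w r) - (w₁ r)^2/(2*(w r)^2)) + 1/r^2) * D.1 * V.1 * W'.1
            - (((2*r*w₁ r + r^2*w₂ r)/(2*(k*w r)) - r^2*(w₁ r)^2/(2*k*(w r)^2)) * D.1
                  * gY y V.2 W'.2
                + psiF k w w₁ r * (fderiv ℝ (fun t => gY t V.2 W'.2) y D.2)),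
           (((w₂ r/(2*w r) - (w₁ r)^2/(2*(w r)^2)) * D.1) * V.1) • W'.2
             + (((w₂ r/(2*w r) - (w₁ r)^2/(2*(w r)^2)) * D.1) * W'.1) • V.2
             + fderiv ℝ (fun t => ΓY t V.2 W'.2) y D.2) := by
    intro V W' D
    have hφc : HasFDerivAt (fun z : ℝ × F => phiF w w₁ z.1)
        (((w₂ r/(2*w r) - (w₁ r)^2/(2*(w r)^2)) + 1/r^2) • (ContinuousLinearMap.fst ℝ ℝ F))
        (r, y) := (hφd r hr).comp_hasFDerivAt (f := Prod.fst) (r, y) (hasFDerivAt_fst (p := ((r,y) : ℝ × F)))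
    have hψc : HasFDerivAt (fun z : ℝ × F => psiF k w w₁ z.1)
        (((2*r*w₁ r + r^2*w₂ r)/(2*(k*w r)) - r^2*(w₁ r)^2/(2*k*(w r)^2))
          • (ContinuousLinearMap.fst ℝ ℝ F)) (r, y) :=
      (hψd r hr).comp_hasFDerivAt (f := Prod.fst) (r, y) (hasFDerivAt_fst (p := ((r,y) : ℝ × F)))
    have hθc : HasFDerivAt (fun z : ℝ × F => thetaF w w₁ z.1)
        ((w₂ r/(2*w r) - (w₁ r)^2/(2*(w r)^2)) • (ContinuousLinearMap.fst ℝ ℝ F)) (r, y) :=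
      (hθd r hr).comp_hasFDerivAt (f := Prod.fst) (r, y) (hasFDerivAt_fst (p := ((r,y) : ℝ × F)))
    have hgyV : HasFDerivAt (fun z : ℝ × F => gY z.2 V.2 W'.2)
        ((fderiv ℝ (fun t => gY t V.2 W'.2) y).comp (ContinuousLinearMap.snd ℝ ℝ F)) (r, y) :=
      ((hgYdiff V.2 W'.2 y hy).hasFDerivAt).comp (f := Prod.snd) (r, y) (hasFDerivAt_snd (p := ((r,y) : ℝ × F)))
    have hΓyV : HasFDerivAt (fun z : ℝ × F => ΓY z.2 V.2 W'.2)
        ((fderiv ℝ (fun t => ΓY t V.2 W'.2) y).comp (ContinuousLinearMap.snd ℝ ℝ F)) (r, y) :=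
      ((hΓYdiff V.2 W'.2 y hy).hasFDerivAt).comp (f := Prod.snd) (r, y) (hasFDerivAt_snd (p := ((r,y) : ℝ × F)))
    have c1 := ((hφc.mul_const V.1).mul_const W'.1).sub (hψc.mul hgyV)
    have c2 := (((hθc.mul_const V.1).smul_const W'.2).add
        ((hθc.mul_const W'.1).smul_const V.2)).add hΓyV
    have htot := HasFDerivAt.prodMk c1 c2
    have hfun : (fun z : ℝ × F => Gam0 k w w₁ gY ΓY z V W')
        = fun z : ℝ × F =>
          ((phiF w w₁ z.1 * V.1) * W'.1 - psiF k w w₁ z.1 * gY z.2 V.2 W'.2,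
           ((thetaF w w₁ z.1 * V.1) • W'.2 + (thetaF w w₁ z.1 * W'.1) • V.2)
             + ΓY z.2 V.2 W'.2) := rfl
    rw [hfun, (show HasFDerivAt (fun z : ℝ × F =>
          ((phiF w w₁ z.1 * V.1) * W'.1 - psiF k w w₁ z.1 * gY z.2 V.2 W'.2,
           ((thetaF w w₁ z.1 * V.1) • W'.2 + (thetaF w w₁ z.1 * W'.1) • V.2)
             + ΓY z.2 V.2 W'.2)) _ (r, y) from htot).fderiv]
    simp only [ContinuousLinearMap.prod_apply, ContinuousLinearMap.add_apply,
      ContinuousLinearMap.sub_apply, ContinuousLinearMap.smul_apply,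
      ContinuousLinearMap.comp_apply, ContinuousLinearMap.coe_fst',
      ContinuousLinearMap.coe_snd', ContinuousLinearMap.smulRight_apply, smul_eq_mul,
      Prod.mk.injEq]
    constructor
    · ring
    · module
  -- ΓY linearity helpers
  have ΓYadd2 : ∀ z t s : F, ΓY y z (t + s) = ΓY y z t + ΓY y z s :=
    fun z t s => (hΓYlin y hy z).map_add t s
  have ΓYsmul2 : ∀ (c : ℝ) (z t : F), ΓY y z (c • t) = c • ΓY y z t :=
    fun c z t => (hΓYlin y hy z).map_smul c t
  -- assemble
  rw [hcurv, hGeq (r,y) hpU]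
  simp only [curvOf]
  rw [hΓ0fd B B A, hΓ0fd A B B]
  rw [hΓYcomp y hy A.2 B.2 B.2, hΓYcomp y hy B.2 A.2 B.2]
  simp only [gw, Gam0, Prod.fst_sub, Prod.snd_sub, Prod.fst_add, Prod.snd_add]
  rw [hGeq (r,y) hpU, hGeq (r,y) hpU, hGeq (r,y) hpU]
  simp only [gw]
  simp only [ΓYadd2, ΓYsmul2, hΓYsym y hy B.2 A.2]
  simp only [gYadd1 y hy, gYsmul1 y hy, gYsub1 y hy, gYadd2 y hy, gYsmul2 y hy,
    gYsub2 y hy, smul_add, smul_smul]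
  rw [hgYsym y hy B.2 A.2, hgYsym y hy (ΓY y A.2 B.2) B.2, hgYsym y hy (ΓY y B.2 B.2) A.2]
  have hr0 : r ≠ 0 := ne_of_gt hr
  have hw0 : w r ≠ 0 := (hwpos r hr).ne'
  have hθ'v : w₂ r / (2 * w r) - w₁ r ^ 2 / (2 * w r ^ 2)
      = -((k*C) * w r / r^2) - w₁ r / (2 * w r * r) := by
    have h2 := hE2 r hr
    field_simp
    linear_combination h2
  have hψ'v : (2 * r * w₁ r + r ^ 2 * w₂ r) / (2 * (k * w r)) - r ^ 2 * w₁ r ^ 2 / (2 * k * w r ^ 2)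
      = -(C * w r) + r * w₁ r / (2 * (k * w r)) := by
    have h2 := hE2 r hr
    field_simp
    linear_combination h2
  have hW1sq : w₁ r ^ 2 = 4 * w r ^ 2 * (C₁ - k * C * w r) / r ^ 2 := by
    have h1 := hE1 r hr
    field_simp
    linear_combination h1
  rw [hθ'v, hψ'v]
  generalize gY y A.2 A.2 = q1
  generalize gY y B.2 B.2 = q2
  generalize gY y A.2 B.2 = q3
  generalize gY y B.2 (ΓY y A.2 B.2) = q4
  generalize gY y A.2 (ΓY y B.2 B.2) = q5
  generalize gY y (ΓY y A.2 B.2) A.2 = q6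
  generalize gY y ((fderiv ℝ (fun t => ΓY t B.2 B.2) y) A.2) A.2 = q7
  generalize gY y ((fderiv ℝ (fun t => ΓY t A.2 B.2) y) B.2) A.2 = q8
  generalize gY y (ΓY y A.2 (ΓY y B.2 B.2)) A.2 = q9
  generalize gY y (ΓY y B.2 (ΓY y A.2 B.2)) A.2 = q10
  generalize A.1 = a
  generalize B.1 = b
  unfold thetaF psiF phiF thetaF
  field_simp
  ring_nf
  rw [hW1sq]
  field_simp
  ring

set_option maxHeartbeats 2000000 in
theorem main_aux
    (Y : Set F) (hYopen : IsOpen Y)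
    (gY : F → F → F → ℝ) (hgY : IsPseudoMetricOn Y gY)
    (hgYsm : ∀ u v, ContDiffOn ℝ (⊤ : ℕ∞) (fun y => gY y u v) Y)
    (ΓY : F → F → F → F) (hΓY : IsLeviCivitaOn Y gY ΓY)
    (hΓYsm : ∀ u v, ContDiffOn ℝ (⊤ : ℕ∞) (fun y => ΓY y u v) Y)
    (k : ℝ) (hk : k ≠ 0) (C C₁ : ℝ) (w w₁ w₂ : ℝ → ℝ)
    (hwd : ∀ r ∈ Ioi (0:ℝ), HasDerivAt w (w₁ r) r)
    (hwd1 : ∀ r ∈ Ioi (0:ℝ), HasDerivAt w₁ (w₂ r) r)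
    (hwpos : ∀ r ∈ Ioi (0:ℝ), 0 < w r)
    (hE1 : ∀ r ∈ Ioi (0:ℝ), r^2*(w₁ r)^2 = 4*(w r)^2*(C₁ - (k*C)*w r))
    (hE2 : ∀ r ∈ Ioi (0:ℝ), r^2*w₂ r*w r - r^2*(w₁ r)^2 + r*w₁ r*w r
        + 2*(k*C)*(w r)^3 = 0)
    (Γ : ℝ × F → ℝ × F → ℝ × F → ℝ × F)
    (hΓ : IsLeviCivitaOn (Ioi 0 ×ˢ Y)
      (warpedMetric (fun s => k * w s / s ^ 2) (fun s => Real.sqrt (w s)) gY) Γ)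
    (hdef :
      (∀ p ∈ (Ioi 0 ×ˢ Y : Set (ℝ × F)), ∀ u : ℝ × F, u ≠ 0 →
        0 < warpedMetric (fun s => k * w s / s ^ 2) (fun s => Real.sqrt (w s)) gY p u u) ∨
      (∀ p ∈ (Ioi 0 ×ˢ Y : Set (ℝ × F)), ∀ u : ℝ × F, u ≠ 0 →
        warpedMetric (fun s => k * w s / s ^ 2) (fun s => Real.sqrt (w s)) gY p u u < 0)) :
    ((∀ y ∈ Y, ∀ a b : F, LinearIndependent ℝ ![a, b] →
        C₁ / k ≤ sectionalOf gY ΓY y a b) →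
      ∀ r ∈ Ioi (0:ℝ), ∀ y ∈ Y, ∀ A B : ℝ × F, LinearIndependent ℝ ![A, B] →
        C ≤ sectionalOf
              (warpedMetric (fun s => k * w s / s ^ 2) (fun s => Real.sqrt (w s)) gY)
              Γ (r, y) A B) ∧
    ((∀ y ∈ Y, ∀ a b : F, LinearIndependent ℝ ![a, b] →
        sectionalOf gY ΓY y a b ≤ C₁ / k) →
      ∀ r ∈ Ioi (0:ℝ), ∀ y ∈ Y, ∀ A B : ℝ × F, LinearIndependent ℝ ![A, B] →
        sectionalOf
            (warpedMetric (fun s => k * w s / s ^ 2) (fun s => Real.sqrt (w s)) gY)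
            Γ (r, y) A B ≤ C) ∧
    ((∀ r ∈ Ioi (0:ℝ), ∀ y ∈ Y, ∀ A B : ℝ × F, LinearIndependent ℝ ![A, B] →
        sectionalOf
            (warpedMetric (fun s => k * w s / s ^ 2) (fun s => Real.sqrt (w s)) gY)
            Γ (r, y) A B = C) ↔
      (∀ y ∈ Y, ∀ a b : F, LinearIndependent ℝ ![a, b] →
        sectionalOf gY ΓY y a b = C₁ / k)) := by
  classical
  set G := warpedMetric (fun s => k * w s / s ^ 2) (fun s => Real.sqrt (w s)) gY with hGdef
  set U : Set (ℝ × F) := Ioi 0 ×ˢ Y with hUdef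
  have hnd : ∀ p ∈ U, ∀ u : ℝ × F, (∀ v, G p u v = 0) → u = 0 := by
    intro p hp u hall
    by_contra hu
    rcases hdef with h | h
    · exact absurd (hall u) (h p hp u hu).ne'
    · exact absurd (hall u) (h p hp u hu).ne
  have hkey := warped_core Y hYopen gY hgY hgYsm ΓY hΓY hΓYsm k hk C C₁ w w₁ w₂
    hwd hwd1 hwpos hE1 hE2 Γ hΓ hnd
  rw [← hGdef] at hkey
  -- symmetry and linearity of G
  have hGsym : ∀ p ∈ U, ∀ X Z : ℝ × F, G p X Z = G p Z X := by
    intro p hp X Z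
    simp only [hGdef, warpedMetric]
    rw [hgY.1 p.2 hp.2]
    ring
  have hGlin : ∀ p ∈ U, ∀ X : ℝ × F, IsLinearMap ℝ (G p X) := by
    intro p hp X
    constructor
    · intro Z T
      simp only [hGdef, warpedMetric, Prod.fst_add, Prod.snd_add]
      rw [(hgY.2.1 p.2 hp.2 X.2).map_add]
      ring
    · intro c Z
      simp only [hGdef, warpedMetric, Prod.smul_fst, Prod.smul_snd, smul_eq_mul]
      rw [(hgY.2.1 p.2 hp.2 X.2).map_smul]
      simp only [smul_eq_mul]
      ring
  -- positivity of the sectional denominators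
  have hQpos : ∀ r ∈ Ioi (0:ℝ), ∀ y ∈ Y, ∀ A B : ℝ × F, LinearIndependent ℝ ![A, B] →
      0 < G (r,y) A A * G (r,y) B B - G (r,y) A B ^ 2 := by
    intro r hr y hy A B hAB
    have hpU : ((r,y) : ℝ × F) ∈ U := ⟨hr, hy⟩
    rcases hdef with h | h
    · exact cs_pos (G (r,y)) (hGsym (r,y) hpU) (hGlin (r,y) hpU)
        (fun u hu => h (r,y) hpU u hu) hAB
    · have hneg := cs_pos (fun X Z => -G (r,y) X Z)
        (fun X Z => by beta_reduce; rw [hGsym (r,y) hpU X Z])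
        (fun X => ⟨fun a b => by beta_reduce; rw [(hGlin (r,y) hpU X).map_add]; ring,
                   fun c a => by beta_reduce; rw [(hGlin (r,y) hpU X).map_smul]; simp only [smul_eq_mul]; ring⟩)
        (fun u hu => by simpa using (h (r,y) hpU u hu)) hAB
      have e : (-G (r,y) A A) * (-G (r,y) B B) - (-G (r,y) A B)^2
          = G (r,y) A A * G (r,y) B B - G (r,y) A B ^ 2 := by ring
      rw [e] at hneg
      exact hneg
  have hD2pos : ∀ y ∈ Y, ∀ u v : F, LinearIndependent ℝ ![u, v] →
      0 < gY y u u * gY y v v - gY y u v ^ 2 := by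
    intro y hy u v huv
    have hpU : ((1,y) : ℝ × F) ∈ U := ⟨by norm_num, hy⟩
    have hw1 : 0 < w 1 := hwpos 1 (by norm_num)
    rcases hdef with h | h
    · refine cs_pos (gY y) (hgY.1 y hy) (hgY.2.1 y hy) (fun u0 hu0 => ?_) huv
      have := h (1,y) hpU (0, u0) (by simp [Prod.ext_iff, hu0])
      simp only [hGdef, warpedMetric, Real.sq_sqrt hw1.le] at this
      norm_num at this
      nlinarith [this, hw1]
    · have hneg := cs_pos (fun a b => -gY y a b)
        (fun a b => by beta_reduce; rw [hgY.1 y hy a b])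
        (fun a => ⟨fun z t => by beta_reduce; rw [(hgY.2.1 y hy a).map_add]; ring,
                   fun c z => by beta_reduce; rw [(hgY.2.1 y hy a).map_smul]; simp only [smul_eq_mul]; ring⟩)
        (fun u0 hu0 => ?_) huv
      · have e : (-gY y u u) * (-gY y v v) - (-gY y u v)^2
            = gY y u u * gY y v v - gY y u v ^ 2 := by ring
        rw [e] at hneg
        exact hneg
      · have := h (1,y) hpU (0, u0) (by simp [Prod.ext_iff, hu0])
        simp only [hGdef, warpedMetric, Real.sq_sqrt hw1.le] at this
        norm_num at this
        show 0 < -gY y u0 u0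
        nlinarith [this, hw1]
  -- dependent pairs give vanishing contributions
  have hTdep : ∀ y ∈ Y, ∀ u v : F, ¬ LinearIndependent ℝ ![u, v] →
      gY y (curvOf ΓY y u v v) u = 0 ∧ gY y u u * gY y v v - gY y u v ^ 2 = 0 := by
    intro y hy u v h
    constructor
    · rw [curv_dep_zero Y hYopen ΓY hΓY.1 hΓY.2.1
        (fun u v x hx => ((hΓYsm u v).contDiffAt (hYopen.mem_nhds hx)).differentiableAt (by simp))
        y hy u v h]
      rw [hgY.1 y hy]
      exact (hgY.2.1 y hy u).map_zero
    · exact dep_disc_zero (gY y) (hgY.1 y hy) (hgY.2.1 y hy) h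
  -- the sectional curvature formula
  have hsec : ∀ r ∈ Ioi (0:ℝ), ∀ y ∈ Y, ∀ A B : ℝ × F, LinearIndependent ℝ ![A, B] →
      sectionalOf G Γ (r,y) A B
        = C + (w r * (gY y (curvOf ΓY y A.2 B.2 B.2) A.2
            - C₁/k * (gY y A.2 A.2 * gY y B.2 B.2 - gY y A.2 B.2 ^ 2)))
          / (G (r,y) A A * G (r,y) B B - G (r,y) A B ^ 2) := by
    intro r hr y hy A B hAB
    have hQ := hQpos r hr y hy A B hAB
    unfold sectionalOf
    rw [hkey r hr y hy A B]
    rw [add_div, mul_div_cancel_right₀ _ (ne_of_gt hQ)]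
  -- the tangential term is controlled by the hypotheses on K^Y
  have hTle : ∀ y ∈ Y, ∀ u v : F,
      ((∀ a b : F, LinearIndependent ℝ ![a, b] → C₁ / k ≤ sectionalOf gY ΓY y a b) →
        0 ≤ gY y (curvOf ΓY y u v v) u
            - C₁/k * (gY y u u * gY y v v - gY y u v ^ 2)) := by
    intro y hy u v hyp
    by_cases hdep : LinearIndependent ℝ ![u, v]
    · have hD2 := hD2pos y hy u v hdep
      have h1 := hyp u v hdep
      unfold sectionalOf at h1
      rw [le_div_iff₀ hD2] at h1
      linarith
    · obtain ⟨e1, e2⟩ := hTdep y hy u v hdep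
      rw [e1, e2]
      simp
  have hTge : ∀ y ∈ Y, ∀ u v : F,
      ((∀ a b : F, LinearIndependent ℝ ![a, b] → sectionalOf gY ΓY y a b ≤ C₁ / k) →
        gY y (curvOf ΓY y u v v) u
            - C₁/k * (gY y u u * gY y v v - gY y u v ^ 2) ≤ 0) := by
    intro y hy u v hyp
    by_cases hdep : LinearIndependent ℝ ![u, v]
    · have hD2 := hD2pos y hy u v hdep
      have h1 := hyp u v hdep
      unfold sectionalOf at h1
      rw [div_le_iff₀ hD2] at h1
      linarith
    · obtain ⟨e1, e2⟩ := hTdep y hy u v hdep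
      rw [e1, e2]
      simp
  refine ⟨?_, ?_, ?_, ?_⟩
  · -- K^g ≥ C
    intro hyp r hr y hy A B hAB
    rw [hsec r hr y hy A B hAB]
    have hT := hTle y hy A.2 B.2 (fun a b hab => hyp y hy a b hab)
    have hQ := hQpos r hr y hy A B hAB
    have hw0 := hwpos r hr
    have : 0 ≤ (w r * (gY y (curvOf ΓY y A.2 B.2 B.2) A.2
        - C₁/k * (gY y A.2 A.2 * gY y B.2 B.2 - gY y A.2 B.2 ^ 2)))
        / (G (r,y) A A * G (r,y) B B - G (r,y) A B ^ 2) :=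
      div_nonneg (mul_nonneg hw0.le hT) hQ.le
    linarith
  · -- K^g ≤ C
    intro hyp r hr y hy A B hAB
    rw [hsec r hr y hy A B hAB]
    have hT := hTge y hy A.2 B.2 (fun a b hab => hyp y hy a b hab)
    have hQ := hQpos r hr y hy A B hAB
    have hw0 := hwpos r hr
    have : (w r * (gY y (curvOf ΓY y A.2 B.2 B.2) A.2
        - C₁/k * (gY y A.2 A.2 * gY y B.2 B.2 - gY y A.2 B.2 ^ 2)))
        / (G (r,y) A A * G (r,y) B B - G (r,y) A B ^ 2) ≤ 0 :=
      div_nonpos_of_nonpos_of_nonneg (mul_nonpos_of_nonneg_of_nonpos hw0.le hT) hQ.le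
    linarith
  · -- K^g ≡ C → K^Y ≡ C₁/k
    intro hKC y hy a b hab
    have hr1 : (1:ℝ) ∈ Ioi (0:ℝ) := by norm_num
    have hABind : LinearIndependent ℝ ![((0:ℝ), a), ((0:ℝ), b)] := by
      rw [LinearIndependent.pair_iff]
      intro s t hst
      have h2 : s • a + t • b = 0 := by
        have := congrArg Prod.snd hst
        simpa using this
      exact LinearIndependent.pair_iff.mp hab s t h2
    have hs := hKC 1 hr1 y hy ((0:ℝ), a) ((0:ℝ), b) hABind
    rw [hsec 1 hr1 y hy _ _ hABind] at hs
    have hQ := hQpos 1 hr1 y hy _ _ hABind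
    have hw1 := hwpos 1 hr1
    have hT0 : gY y (curvOf ΓY y a b b) a
        - C₁/k * (gY y a a * gY y b b - gY y a b ^ 2) = 0 := by
      have h0 : (w 1 * (gY y (curvOf ΓY y a b b) a
          - C₁/k * (gY y a a * gY y b b - gY y a b ^ 2)))
          / (G (1,y) ((0:ℝ),a) ((0:ℝ),a) * G (1,y) ((0:ℝ),b) ((0:ℝ),b)
              - G (1,y) ((0:ℝ),a) ((0:ℝ),b) ^ 2) = 0 := by linarith
      rw [div_eq_zero_iff] at h0
      rcases h0 with h0 | h0
      · rcases mul_eq_zero.mp h0 with h0 | h0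
        · exact absurd h0 hw1.ne'
        · exact h0
      · exact absurd h0 (ne_of_gt hQ)
    have hD2 := hD2pos y hy a b hab
    unfold sectionalOf
    rw [show gY y (curvOf ΓY y a b b) a
        = C₁/k * (gY y a a * gY y b b - gY y a b ^ 2) by linarith]
    field_simp
  · -- K^Y ≡ C₁/k → K^g ≡ C
    intro hKY r hr y hy A B hAB
    rw [hsec r hr y hy A B hAB]
    have hT0 : gY y (curvOf ΓY y A.2 B.2 B.2) A.2
        - C₁/k * (gY y A.2 A.2 * gY y B.2 B.2 - gY y A.2 B.2 ^ 2) = 0 := by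
      by_cases hdep : LinearIndependent ℝ ![A.2, B.2]
      · have hD2 := hD2pos y hy A.2 B.2 hdep
        have h1 := hKY y hy A.2 B.2 hdep
        unfold sectionalOf at h1
        rw [div_eq_iff (ne_of_gt hD2)] at h1
        linarith
      · obtain ⟨e1, e2⟩ := hTdep y hy A.2 B.2 hdep
        rw [e1, e2]
        simp
    rw [hT0]
    simp

/-- Suppose `g = g(w(kC, C₁, C₂, ·)) = (k w(r)/r²) dr² + w(r) g_Y`
on `ℝ_{>0} × Y`, with `(kC, C₁, C₂) ∈ Δ₁ ∪ Δ₂ ∪ Δ₃`, is definite (positive or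
negative definite).  Then `K^g ≥ C` when `K^{g_Y} ≥ C₁/k`, `K^g ≤ C` when
`K^{g_Y} ≤ C₁/k`, and `K^g ≡ C` iff `K^{g_Y} ≡ C₁/k`. -/
theorem statement_7
    (Y : Set F) (hYopen : IsOpen Y)
    (gY : F → F → F → ℝ) (hgY : IsPseudoMetricOn Y gY)
    (hgYsm : ∀ u v, ContDiffOn ℝ (⊤ : ℕ∞) (fun y => gY y u v) Y)
    (ΓY : F → F → F → F) (hΓY : IsLeviCivitaOn Y gY ΓY)
    (hΓYsm : ∀ u v, ContDiffOn ℝ (⊤ : ℕ∞) (fun y => ΓY y u v) Y)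
    (k : ℝ) (hk : k ≠ 0) (C ε C₁ C₂ : ℝ) (hε : ε = 1 ∨ ε = -1)
    (hΔ : ((k * C, C₁, C₂) : ℝ × ℝ × ℝ) ∈ DeltaSet)
    (hwpos : ∀ r > (0:ℝ), 0 < wFam ε (k * C) C₁ C₂ r)
    (Γ : ℝ × F → ℝ × F → ℝ × F → ℝ × F)
    (hΓ : IsLeviCivitaOn (Ioi 0 ×ˢ Y)
      (warpedMetric (fun r => k * wFam ε (k * C) C₁ C₂ r / r ^ 2)
        (fun r => Real.sqrt (wFam ε (k * C) C₁ C₂ r)) gY) Γ)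
    (hΓsm : ∀ u v, ContDiffOn ℝ (⊤ : ℕ∞) (fun p => Γ p u v) (Ioi 0 ×ˢ Y))
    -- `g` is definite: positive definite or negative definite on the region
    (hdef :
      (∀ p ∈ (Ioi 0 ×ˢ Y : Set (ℝ × F)), ∀ u : ℝ × F, u ≠ 0 →
        0 < warpedMetric (fun s => k * wFam ε (k * C) C₁ C₂ s / s ^ 2)
              (fun s => Real.sqrt (wFam ε (k * C) C₁ C₂ s)) gY p u u) ∨
      (∀ p ∈ (Ioi 0 ×ˢ Y : Set (ℝ × F)), ∀ u : ℝ × F, u ≠ 0 →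
        warpedMetric (fun s => k * wFam ε (k * C) C₁ C₂ s / s ^ 2)
              (fun s => Real.sqrt (wFam ε (k * C) C₁ C₂ s)) gY p u u < 0)) :
    -- `K^g ≥ C` when `K^{g_Y} ≥ C₁/k`
    ((∀ y ∈ Y, ∀ a b : F, LinearIndependent ℝ ![a, b] →
        C₁ / k ≤ sectionalOf gY ΓY y a b) →
      ∀ r ∈ Ioi (0:ℝ), ∀ y ∈ Y, ∀ A B : ℝ × F, LinearIndependent ℝ ![A, B] →
        C ≤ sectionalOf
              (warpedMetric (fun s => k * wFam ε (k * C) C₁ C₂ s / s ^ 2)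
                (fun s => Real.sqrt (wFam ε (k * C) C₁ C₂ s)) gY)
              Γ (r, y) A B) ∧
    -- `K^g ≤ C` when `K^{g_Y} ≤ C₁/k`
    ((∀ y ∈ Y, ∀ a b : F, LinearIndependent ℝ ![a, b] →
        sectionalOf gY ΓY y a b ≤ C₁ / k) →
      ∀ r ∈ Ioi (0:ℝ), ∀ y ∈ Y, ∀ A B : ℝ × F, LinearIndependent ℝ ![A, B] →
        sectionalOf
            (warpedMetric (fun s => k * wFam ε (k * C) C₁ C₂ s / s ^ 2)
              (fun s => Real.sqrt (wFam ε (k * C) C₁ C₂ s)) gY)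
            Γ (r, y) A B ≤ C) ∧
    -- `K^g ≡ C` iff `K^{g_Y} ≡ C₁/k`
    ((∀ r ∈ Ioi (0:ℝ), ∀ y ∈ Y, ∀ A B : ℝ × F, LinearIndependent ℝ ![A, B] →
        sectionalOf
            (warpedMetric (fun s => k * wFam ε (k * C) C₁ C₂ s / s ^ 2)
              (fun s => Real.sqrt (wFam ε (k * C) C₁ C₂ s)) gY)
            Γ (r, y) A B = C) ↔
      (∀ y ∈ Y, ∀ a b : F, LinearIndependent ℝ ![a, b] →
        sectionalOf gY ΓY y a b = C₁ / k)) := by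
  
  rcases hΔ with h1 | h2 | h3
  · obtain ⟨w₁, w₂, hwd, hwd1, hE1, hE2⟩ := delta1_facts ε (k*C) C₁ C₂ h1.1 h1.2
    exact main_aux Y hYopen gY hgY hgYsm ΓY hΓY hΓYsm k hk C C₁ _ w₁ w₂ hwd hwd1
      (fun r hr => hwpos r hr) hE1 hE2 Γ hΓ hdef
  · have hkc : k * C = 0 := h2.1
    obtain ⟨w₁, w₂, hwd, hwd1, hE1, hE2⟩ := delta2_facts ε C₁ C₂ hε h2.2
    have hww : wFam ε (k*C) C₁ C₂ = wFam ε 0 C₁ C₂ := by rw [hkc]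
    rw [hww] at hΓ hdef hwpos ⊢
    exact main_aux Y hYopen gY hgY hgYsm ΓY hΓY hΓYsm k hk C C₁ _ w₁ w₂ hwd hwd1
      (fun r hr => hwpos r hr) (fun r hr => by rw [hkc]; exact hE1 r hr)
      (fun r hr => by rw [hkc]; exact hE2 r hr) Γ hΓ hdef
  · exact (delta3_absurd ε (k*C) C₁ C₂ h3.1 hwpos).elim
end
end

section
/- For the Riemannian metric g = g(w) on ℝ_{>0} × Y with d_g assumed to be a metric, fix 0 < R₁ < R₂. There exist δ = δ(R₁, R₂, T) > 0 and constants C' = C'(R₁, R₂, w) > 0, C'' = C''(R₁, R₂, w) > 0 such that for all (r₀, y₀), (r₁, y₁) ∈ (R₁, R₂) × Y: (1) if d_g((r₀,y₀),(r₁,y₁)) < δ, then d_{g_Y}(y₀, y₁) ≤ C'·d_g((r₀,y₀),(r₁,y₁)); (2) d_g((r₀,y₀),(r₁,y₁)) ≤ |T(r₀) − T(r₁)| + C''·d_{g_Y}(y₀, y₁). -/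
/-! STATEMENT 11: comparison of d_g and d_{g_Y} on (R₁, R₂) × Y. -/

noncomputable section

open Real Set Filter Topology

variable {E : Type*} [NormedAddCommGroup E] [NormedSpace ℝ E]

/-- A piecewise smooth path `c : [0,1] → α`: continuous on `[0,1]` and
differentiable away from finitely many points. -/
def IsPiecewisePath {α : Type*} [NormedAddCommGroup α] [NormedSpace ℝ α]
    (c : ℝ → α) : Prop :=
  ContinuousOn c (Set.Icc 0 1) ∧
  ∃ s : Finset ℝ, ∀ t ∈ Set.Icc (0:ℝ) 1 \ (s : Set ℝ), DifferentiableAt ℝ c t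

/-- The speed `|ċ(t)|_g` of a path with respect to the metric `g`. -/
noncomputable def speedOf {α : Type*} [NormedAddCommGroup α] [NormedSpace ℝ α]
    (g : α → α → α → ℝ) (c : ℝ → α) (t : ℝ) : ℝ :=
  Real.sqrt (g (c t) (deriv c t) (deriv c t))

/-- The length `L_g(c) = ∫₀¹ |ċ(t)|_g dt` of a path. -/
noncomputable def lengthOf {α : Type*} [NormedAddCommGroup α] [NormedSpace ℝ α]
    (g : α → α → α → ℝ) (c : ℝ → α) : ℝ :=
  ∫ t in (0:ℝ)..1, speedOf g c t

/-- The pseudometric induced by the Riemannian metric `g` on `U`: the infimum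
of the lengths of piecewise smooth paths in `U` joining the two points. -/
noncomputable def pseudoDistOf {α : Type*} [NormedAddCommGroup α] [NormedSpace ℝ α]
    (U : Set α) (g : α → α → α → ℝ) (p q : α) : ℝ :=
  sInf {L : ℝ | ∃ c : ℝ → α, IsPiecewisePath c ∧ (∀ t ∈ Set.Icc (0:ℝ) 1, c t ∈ U) ∧
    IntervalIntegrable (speedOf g c) MeasureTheory.volume 0 1 ∧
    c 0 = p ∧ c 1 = q ∧ L = lengthOf g c}

/-- The warped product metric `g(w) = (k w(r)/r²) dr² + w(r) g_Y` on
`ℝ_{>0} × Y ⊆ ℝ × F`. -/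
noncomputable def warpedW {F : Type*} [NormedAddCommGroup F] [NormedSpace ℝ F]
    (k : ℝ) (w : ℝ → ℝ) (gY : F → F → F → ℝ) (p u v : ℝ × F) : ℝ :=
  k * w p.1 / p.1 ^ 2 * u.1 * v.1 + w p.1 * gY p.2 u.2 v.2

/-- The region `ℝ_{>0} × Y ⊆ ℝ × F`. -/
def RegionW {F : Type*} (Y : Set F) : Set (ℝ × F) := {p | 0 < p.1 ∧ p.2 ∈ Y}

/-- `T(r) = ∫_{R₀}^r √(k w(q))/q dq`. -/
noncomputable def TW (k : ℝ) (w : ℝ → ℝ) (R₀ r : ℝ) : ℝ :=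
  ∫ q in R₀..r, Real.sqrt (k * w q) / q

/-- `d` is a metric (on the whole type). -/
def IsMetricD {Z : Type*} (d : Z → Z → ℝ) : Prop :=
  (∀ p, d p p = 0) ∧ (∀ p q, 0 ≤ d p q) ∧ (∀ p q, d p q = d q p) ∧
  (∀ p q, d p q = 0 → p = q) ∧ (∀ p q z, d p z ≤ d p q + d q z)

namespace S11

open MeasureTheory intervalIntegral

lemma sqrt_add_le' {x y : ℝ} (hx : 0 ≤ x) (hy : 0 ≤ y) :
    Real.sqrt (x + y) ≤ Real.sqrt x + Real.sqrt y := by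
  have h := Real.sqrt_le_sqrt (show x + y ≤ (Real.sqrt x + Real.sqrt y) ^ 2 by
    have hx' := Real.sq_sqrt hx
    have hy' := Real.sq_sqrt hy
    nlinarith [Real.sqrt_nonneg x, Real.sqrt_nonneg y])
  rwa [Real.sqrt_sq (by positivity)] at h

/-- FTC inequality allowing a finite exceptional set. -/
lemma sub_le_integral_except (s : Finset ℝ) :
    ∀ (f f' φ : ℝ → ℝ) (u v : ℝ), u ≤ v → ContinuousOn f (Icc u v) →
    (∀ x ∈ Ioo u v \ (s : Set ℝ), HasDerivWithinAt f (f' x) (Ioi x) x) →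
    IntegrableOn φ (Icc u v) →
    (∀ x ∈ Ioo u v \ (s : Set ℝ), f' x ≤ φ x) →
    f v - f u ≤ ∫ y in u..v, φ y := by
  classical
  induction s using Finset.induction_on with
  | empty =>
    intro f f' φ u v huv hcont hderiv hint hle
    exact sub_le_integral_of_hasDeriv_right_of_le huv hcont
      (fun x hx => hderiv x (by simpa using hx)) hint (fun x hx => hle x (by simpa using hx))
  | @insert x s hxs ih =>
    intro f f' φ u v huv hcont hderiv hint hle
    by_cases hxm : x ∈ Ioo u v
    · have hsub1 : Ioo u x \ (s : Set ℝ) ⊆ Ioo u v \ ((insert x s : Finset ℝ) : Set ℝ) := by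
        intro y hy
        refine ⟨⟨hy.1.1, hy.1.2.trans hxm.2⟩, ?_⟩
        simp only [Finset.coe_insert, Set.mem_insert_iff, not_or]
        exact ⟨ne_of_lt hy.1.2, hy.2⟩
      have hsub2 : Ioo x v \ (s : Set ℝ) ⊆ Ioo u v \ ((insert x s : Finset ℝ) : Set ℝ) := by
        intro y hy
        refine ⟨⟨hxm.1.trans hy.1.1, hy.1.2⟩, ?_⟩
        simp only [Finset.coe_insert, Set.mem_insert_iff, not_or]
        exact ⟨ne_of_gt hy.1.1, hy.2⟩
      have h1 := ih f f' φ u x hxm.1.le (hcont.mono (Icc_subset_Icc le_rfl hxm.2.le))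
        (fun z hz => hderiv z (hsub1 hz)) (hint.mono_set (Icc_subset_Icc le_rfl hxm.2.le))
        (fun z hz => hle z (hsub1 hz))
      have h2 := ih f f' φ x v hxm.2.le (hcont.mono (Icc_subset_Icc hxm.1.le le_rfl))
        (fun z hz => hderiv z (hsub2 hz)) (hint.mono_set (Icc_subset_Icc hxm.1.le le_rfl))
        (fun z hz => hle z (hsub2 hz))
      have hi1 : IntervalIntegrable φ volume u x := by
        rw [intervalIntegrable_iff_integrableOn_Ioc_of_le hxm.1.le]
        exact hint.mono_set (fun z hz => ⟨hz.1.le, hz.2.trans hxm.2.le⟩)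
      have hi2 : IntervalIntegrable φ volume x v := by
        rw [intervalIntegrable_iff_integrableOn_Ioc_of_le hxm.2.le]
        exact hint.mono_set (fun z hz => ⟨(hxm.1.trans hz.1).le, hz.2⟩)
      have hadd := integral_add_adjacent_intervals hi1 hi2
      linarith
    · refine ih f f' φ u v huv hcont (fun z hz => hderiv z ⟨hz.1, ?_⟩) hint
        (fun z hz => hle z ⟨hz.1, ?_⟩) <;>
      · simp only [Finset.coe_insert, Set.mem_insert_iff, not_or]
        exact ⟨fun h => hxm (h ▸ hz.1), hz.2⟩

lemma abs_sub_le_integral_except (s : Finset ℝ) (f f' φ : ℝ → ℝ) {u v : ℝ} (huv : u ≤ v)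
    (hcont : ContinuousOn f (Icc u v))
    (hderiv : ∀ x ∈ Ioo u v \ (s : Set ℝ), HasDerivAt f (f' x) x)
    (hint : IntegrableOn φ (Icc u v))
    (hle : ∀ x ∈ Ioo u v \ (s : Set ℝ), |f' x| ≤ φ x) :
    |f v - f u| ≤ ∫ y in u..v, φ y := by
  have h1 := sub_le_integral_except s f f' φ u v huv hcont
    (fun x hx => (hderiv x hx).hasDerivWithinAt) hint
    (fun x hx => (le_abs_self _).trans (hle x hx))
  have h2 := sub_le_integral_except s (fun t => -f t) (fun t => -f' t) φ u v huv hcont.neg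
    (fun x hx => ((hderiv x hx).neg).hasDerivWithinAt) hint
    (fun x hx => (neg_le_abs _).trans (hle x hx))
  rw [abs_le]
  constructor <;> linarith

lemma TW_hasDerivAt {k : ℝ} (hk : 0 < k) {w : ℝ → ℝ} (hw : ContinuousOn w (Ioi 0))
    {R₀ : ℝ} (hR₀ : 0 < R₀) {r : ℝ} (hr : 0 < r) :
    HasDerivAt (TW k w R₀) (Real.sqrt (k * w r) / r) r := by
  have hcont : ContinuousOn (fun q => Real.sqrt (k * w q) / q) (Ioi 0) :=
    (Real.continuous_sqrt.comp_continuousOn (continuousOn_const.mul hw)).div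
      continuousOn_id (fun x hx => ne_of_gt hx)
  have hsub : uIcc R₀ r ⊆ Ioi 0 := fun x hx => lt_of_lt_of_le (lt_min hR₀ hr) hx.1
  have hint : IntervalIntegrable (fun q => Real.sqrt (k * w q) / q) volume R₀ r :=
    (hcont.mono hsub).intervalIntegrable
  exact integral_hasDerivAt_right hint
    (hcont.stronglyMeasurableAtFilter isOpen_Ioi r hr)
    (hcont.continuousAt (isOpen_Ioi.mem_nhds hr))

lemma TW_lt {k : ℝ} (hk : 0 < k) {w : ℝ → ℝ} (hw : ContinuousOn w (Ioi 0))
    (hwpos : ∀ r > (0:ℝ), 0 < w r) {R₀ : ℝ} (hR₀ : 0 < R₀) {x y : ℝ}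
    (hx : 0 < x) (hxy : x < y) : TW k w R₀ x < TW k w R₀ y := by
  have hcont : ContinuousOn (fun q => Real.sqrt (k * w q) / q) (Ioi 0) :=
    (Real.continuous_sqrt.comp_continuousOn (continuousOn_const.mul hw)).div
      continuousOn_id (fun z hz => ne_of_gt hz)
  have hy : 0 < y := hx.trans hxy
  have hint : ∀ {a b : ℝ}, 0 < a → 0 < b →
      IntervalIntegrable (fun q => Real.sqrt (k * w q) / q) volume a b := fun ha hb =>
    (hcont.mono (fun z hz => lt_of_lt_of_le (lt_min ha hb) hz.1)).intervalIntegrable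
  have hdiff : TW k w R₀ y - TW k w R₀ x = ∫ q in x..y, Real.sqrt (k * w q) / q :=
    integral_interval_sub_left (hint hR₀ hy) (hint hR₀ hx)
  have hpos : 0 < ∫ q in x..y, Real.sqrt (k * w q) / q := by
    refine intervalIntegral_pos_of_pos_on (hint hx hy) (fun z hz => ?_) hxy
    have hz0 : 0 < z := hx.trans hz.1
    exact div_pos (Real.sqrt_pos.2 (mul_pos hk (hwpos z hz0))) hz0
  linarith

lemma TW_le {k : ℝ} (hk : 0 < k) {w : ℝ → ℝ} (hw : ContinuousOn w (Ioi 0))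
    (hwpos : ∀ r > (0:ℝ), 0 < w r) {R₀ : ℝ} (hR₀ : 0 < R₀) {x y : ℝ}
    (hx : 0 < x) (hxy : x ≤ y) : TW k w R₀ x ≤ TW k w R₀ y := by
  rcases hxy.eq_or_lt with rfl | h
  · exact le_rfl
  · exact (TW_lt hk hw hwpos hR₀ hx h).le

lemma gY_nonneg {F : Type*} [NormedAddCommGroup F] [NormedSpace ℝ F]
    {Y : Set F} {gY : F → F → F → ℝ}
    (hlin : ∀ x ∈ Y, ∀ u, IsLinearMap ℝ (gY x u))
    (hpos : ∀ y ∈ Y, ∀ a : F, a ≠ 0 → 0 < gY y a a) {y : F} (hy : y ∈ Y) (v : F) :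
    0 ≤ gY y v v := by
  rcases eq_or_ne v 0 with rfl | hv
  · exact le_of_eq ((hlin y hy 0).map_zero).symm
  · exact (hpos y hy v hv).le

lemma length_nonneg {α : Type*} [NormedAddCommGroup α] [NormedSpace ℝ α]
    (g : α → α → α → ℝ) (c : ℝ → α) : 0 ≤ lengthOf g c :=
  intervalIntegral.integral_nonneg zero_le_one fun _ _ => Real.sqrt_nonneg _

/-- Lower bound: the length of a path in the region dominates the variation of `T∘r`. -/
lemma length_ge_T {F : Type*} [NormedAddCommGroup F] [NormedSpace ℝ F]
    {Y : Set F} {gY : F → F → F → ℝ}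
    (hlin : ∀ x ∈ Y, ∀ u, IsLinearMap ℝ (gY x u))
    (hpos : ∀ y ∈ Y, ∀ a : F, a ≠ 0 → 0 < gY y a a)
    {k : ℝ} (hk : 0 < k) {w : ℝ → ℝ} (hw : ContinuousOn w (Ioi 0))
    (hwpos : ∀ r > (0:ℝ), 0 < w r) {R₀ : ℝ} (hR₀ : 0 < R₀)
    {c : ℝ → ℝ × F} (hc : IsPiecewisePath c)
    (hmem : ∀ t ∈ Icc (0:ℝ) 1, c t ∈ RegionW Y)
    (hint : IntervalIntegrable (speedOf (warpedW k w gY) c) volume 0 1)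
    {t₁ : ℝ} (ht₁ : t₁ ∈ Icc (0:ℝ) 1) :
    |TW k w R₀ (c t₁).1 - TW k w R₀ (c 0).1| ≤ lengthOf (warpedW k w gY) c := by
  obtain ⟨hccont, s, hcdiff⟩ := hc
  set φ := speedOf (warpedW k w gY) c with hφ
  set f : ℝ → ℝ := fun t => TW k w R₀ (c t).1 with hf
  set f' : ℝ → ℝ := fun t => Real.sqrt (k * w ((c t).1)) / (c t).1 * (deriv c t).1 with hf'
  have hIccsub : Icc (0:ℝ) t₁ ⊆ Icc 0 1 := Icc_subset_Icc le_rfl ht₁.2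
  -- continuity of f on [0, t₁]
  have hTcont : ContinuousOn (TW k w R₀) (Ioi 0) := fun z hz =>
    ((TW_hasDerivAt hk hw hR₀ hz).continuousAt).continuousWithinAt
  have hc1 : ContinuousOn (fun t => (c t).1) (Icc 0 1) :=
    continuous_fst.comp_continuousOn hccont
  have hfcont : ContinuousOn f (Icc 0 t₁) :=
    hTcont.comp (hc1.mono hIccsub) (fun t ht => (hmem t (hIccsub ht)).1)
  -- derivative of f off s
  have hderiv : ∀ x ∈ Ioo 0 t₁ \ (s : Set ℝ), HasDerivAt f (f' x) x := by
    intro x hx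
    have hxI : x ∈ Icc (0:ℝ) 1 := hIccsub ⟨hx.1.1.le, hx.1.2.le⟩
    have hdx : DifferentiableAt ℝ c x := hcdiff x ⟨hxI, hx.2⟩
    have h1 : HasDerivAt (fun u => (c u).1) ((deriv c x).1) x := by
      exact hasFDerivAt_fst.comp_hasDerivAt x hdx.hasDerivAt
    exact (TW_hasDerivAt hk hw hR₀ (hmem x hxI).1).comp x h1
  -- integrability of φ on [0, t₁]
  have hφint : IntegrableOn φ (Icc 0 t₁) := by
    rw [integrableOn_Icc_iff_integrableOn_Ioc]
    exact hint.1.mono_set (Ioc_subset_Ioc le_rfl ht₁.2)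
  -- pointwise bound |f'| ≤ φ
  have hbd : ∀ x ∈ Ioo 0 t₁ \ (s : Set ℝ), |f' x| ≤ φ x := by
    intro x hx
    have hxI : x ∈ Icc (0:ℝ) 1 := hIccsub ⟨hx.1.1.le, hx.1.2.le⟩
    have hr : 0 < (c x).1 := (hmem x hxI).1
    have hy : (c x).2 ∈ Y := (hmem x hxI).2
    have hkw : 0 ≤ k * w ((c x).1) := mul_nonneg hk.le (hwpos _ hr).le
    have hB : 0 ≤ w ((c x).1) * gY (c x).2 (deriv c x).2 (deriv c x).2 :=
      mul_nonneg (hwpos _ hr).le (gY_nonneg hlin hpos hy _)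
    have hA : (f' x) ^ 2 = k * w ((c x).1) / (c x).1 ^ 2 * (deriv c x).1 * (deriv c x).1 := by
      simp only [hf', mul_pow, div_pow, Real.sq_sqrt hkw]
      ring
    calc |f' x| = Real.sqrt ((f' x) ^ 2) := (Real.sqrt_sq_eq_abs _).symm
      _ ≤ Real.sqrt (warpedW k w gY (c x) (deriv c x) (deriv c x)) := by
          refine Real.sqrt_le_sqrt ?_
          rw [hA]
          simp only [warpedW]
          linarith
      _ = φ x := rfl
  have hmain := abs_sub_le_integral_except s f f' φ ht₁.1 hfcont hderiv hφint hbd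
  -- ∫_0^{t₁} φ ≤ ∫_0^1 φ
  have hii1 : IntervalIntegrable φ volume 0 t₁ := hint.mono_set
    (by rw [uIcc_of_le ht₁.1, uIcc_of_le zero_le_one]; exact hIccsub)
  have hii2 : IntervalIntegrable φ volume t₁ 1 := hint.mono_set
    (by rw [uIcc_of_le ht₁.2, uIcc_of_le zero_le_one]; exact Icc_subset_Icc ht₁.1 le_rfl)
  have hadd := integral_add_adjacent_intervals hii1 hii2
  have hnn : 0 ≤ ∫ t in t₁..1, φ t :=
    intervalIntegral.integral_nonneg ht₁.2 (fun _ _ => Real.sqrt_nonneg _)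
  have hlen : lengthOf (warpedW k w gY) c = ∫ t in (0:ℝ)..1, φ t := rfl
  rw [hlen]
  calc |f t₁ - f 0| ≤ ∫ y in (0:ℝ)..t₁, φ y := hmain
    _ ≤ ∫ t in (0:ℝ)..1, φ t := by linarith

/-- The projection to `Y` of a path staying over `r ∈ [a,b]` compares lengths. -/
lemma proj_dist_le {F : Type*} [NormedAddCommGroup F] [NormedSpace ℝ F]
    {Y : Set F} {gY : F → F → F → ℝ}
    (hlin : ∀ x ∈ Y, ∀ u, IsLinearMap ℝ (gY x u))
    (hpos : ∀ y ∈ Y, ∀ a : F, a ≠ 0 → 0 < gY y a a)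
    {k : ℝ} (hk : 0 < k) {w : ℝ → ℝ} (hw : ContinuousOn w (Ioi 0))
    (hwpos : ∀ r > (0:ℝ), 0 < w r)
    {m : ℝ} (hm : 0 < m) {a b : ℝ}
    (hmle : ∀ x ∈ Icc a b, m ≤ w x)
    {c : ℝ → ℝ × F} (hc : IsPiecewisePath c)
    (hmem : ∀ t ∈ Icc (0:ℝ) 1, c t ∈ RegionW Y)
    (hint : IntervalIntegrable (speedOf (warpedW k w gY) c) volume 0 1)
    (hrab : ∀ t ∈ Icc (0:ℝ) 1, (c t).1 ∈ Icc a b) :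
    pseudoDistOf Y gY (c 0).2 (c 1).2 ≤ (1 / Real.sqrt m) * lengthOf (warpedW k w gY) c := by
  obtain ⟨hccont, s, hcdiff⟩ := hc
  set γ : ℝ → F := fun t => (c t).2 with hγ
  set σ := speedOf (warpedW k w gY) c with hσ
  set Φ : ℝ → ℝ := fun t =>
    Real.sqrt (σ t ^ 2 - k * w ((c t).1) / ((c t).1) ^ 2 * (deriv (fun u => (c u).1) t) ^ 2)
      / Real.sqrt (w ((c t).1)) with hΦ
  have hσnn : ∀ t, 0 ≤ σ t := fun t => Real.sqrt_nonneg _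
  have hr0 : ∀ t ∈ Icc (0:ℝ) 1, 0 < (c t).1 := fun t ht => (hmem t ht).1
  have hwrpos : ∀ t ∈ Icc (0:ℝ) 1, 0 < w ((c t).1) := fun t ht => hwpos _ (hr0 t ht)
  -- (i) pointwise equality off s
  have hkey : ∀ t ∈ Icc (0:ℝ) 1 \ (s : Set ℝ), speedOf gY γ t = Φ t := by
    intro t ht
    have hdx : DifferentiableAt ℝ c t := hcdiff t ht
    have hd2 : HasDerivAt γ ((deriv c t).2) t := by
      exact hasFDerivAt_snd.comp_hasDerivAt t hdx.hasDerivAt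
    have hd1 : HasDerivAt (fun u => (c u).1) ((deriv c t).1) t := by
      exact hasFDerivAt_fst.comp_hasDerivAt t hdx.hasDerivAt
    have hrpos := hr0 t ht.1
    have hwr := hwrpos t ht.1
    have hgnn : 0 ≤ gY (c t).2 (deriv c t).2 (deriv c t).2 :=
      gY_nonneg hlin hpos (hmem t ht.1).2 _
    have hApos : 0 ≤ k * w ((c t).1) / ((c t).1) ^ 2 := by positivity
    have hG0 : 0 ≤ warpedW k w gY (c t) (deriv c t) (deriv c t) := by
      simp only [warpedW]
      have h1 : 0 ≤ k * w ((c t).1) / ((c t).1) ^ 2 * (deriv c t).1 * (deriv c t).1 := by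
        rw [mul_assoc]
        exact mul_nonneg hApos (mul_self_nonneg _)
      have h2 : 0 ≤ w ((c t).1) * gY (c t).2 (deriv c t).2 (deriv c t).2 :=
        mul_nonneg hwr.le hgnn
      linarith
    have hsq : σ t ^ 2 = warpedW k w gY (c t) (deriv c t) (deriv c t) := Real.sq_sqrt hG0
    have hsub : σ t ^ 2 - k * w ((c t).1) / ((c t).1) ^ 2 * (deriv (fun u => (c u).1) t) ^ 2
        = w ((c t).1) * gY (c t).2 (deriv c t).2 (deriv c t).2 := by
      rw [hsq, hd1.deriv]
      simp only [warpedW]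
      ring
    rw [hΦ]
    simp only
    rw [hsub, Real.sqrt_mul hwr.le,
      mul_div_cancel_left₀ _ (by positivity : Real.sqrt (w ((c t).1)) ≠ 0)]
    simp only [speedOf, hd2.deriv]
    rfl
  -- (ii) pointwise bound
  have hbd : ∀ t ∈ Icc (0:ℝ) 1, Φ t ≤ 1 / Real.sqrt m * σ t := by
    intro t ht
    have hrpos := hr0 t ht
    have hwr := hwrpos t ht
    have hAnn : 0 ≤ k * w ((c t).1) / ((c t).1) ^ 2 * (deriv (fun u => (c u).1) t) ^ 2 := by
      positivity
    have h1 : Real.sqrt (σ t ^ 2 - k * w ((c t).1) / ((c t).1) ^ 2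
        * (deriv (fun u => (c u).1) t) ^ 2) ≤ σ t := by
      refine (Real.sqrt_le_sqrt (by linarith : _ ≤ σ t ^ 2)).trans_eq
        (Real.sqrt_sq (hσnn t))
    have h2 : Real.sqrt m ≤ Real.sqrt (w ((c t).1)) :=
      Real.sqrt_le_sqrt (hmle _ (hrab t ht))
    rw [hΦ]
    simp only
    rw [one_div, inv_mul_eq_div]
    exact div_le_div₀ (hσnn t) h1 (Real.sqrt_pos.2 hm) h2
  -- measurability of Φ
  have hσm : AEStronglyMeasurable σ (volume.restrict (Ioc (0:ℝ) 1)) :=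
    hint.1.aestronglyMeasurable
  have hwcont : ContinuousOn (fun t => w ((c t).1)) (Icc (0:ℝ) 1) :=
    hw.comp (continuous_fst.comp_continuousOn hccont) (fun t ht => hr0 t ht)
  have hrest : volume.restrict (Ioc (0:ℝ) 1) ≤ volume.restrict (Icc (0:ℝ) 1) :=
    Measure.restrict_mono Ioc_subset_Icc_self le_rfl
  have hwm : AEMeasurable (fun t => w ((c t).1)) (volume.restrict (Ioc (0:ℝ) 1)) :=
    (hwcont.aemeasurable measurableSet_Icc).mono_measure hrest
  have hrm : AEMeasurable (fun t => (c t).1) (volume.restrict (Ioc (0:ℝ) 1)) :=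
    (((continuous_fst.comp_continuousOn hccont)).aemeasurable
      measurableSet_Icc).mono_measure hrest
  have hdm : AEMeasurable (deriv (fun u => (c u).1)) (volume.restrict (Ioc (0:ℝ) 1)) :=
    (measurable_deriv _).aemeasurable
  have hΦm : AEStronglyMeasurable Φ (volume.restrict (Ioc (0:ℝ) 1)) := by
    refine AEMeasurable.aestronglyMeasurable ?_
    have hsqrt := Real.continuous_sqrt.measurable
    exact ((hsqrt.comp_aemeasurable ((hσm.aemeasurable.pow_const 2).sub
      (((aemeasurable_const.mul hwm).div (hrm.pow_const 2)).mul
        (hdm.pow_const 2)))).div (hsqrt.comp_aemeasurable hwm))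
  -- s is null
  have hsnull : ∀ᵐ t ∂volume.restrict (Ioc (0:ℝ) 1), t ∉ (s : Set ℝ) := by
    refine ae_restrict_of_ae ?_
    have : (volume : Measure ℝ) (s : Set ℝ) = 0 := (Finset.finite_toSet s).measure_zero _
    exact (MeasureTheory.measure_eq_zero_iff_ae_notMem).1 this
  -- integrability of Φ on (0,1]
  have hΦint : IntegrableOn Φ (Ioc (0:ℝ) 1) := by
    refine Integrable.mono (hint.1.const_mul (1 / Real.sqrt m)) hΦm ?_
    filter_upwards [ae_restrict_mem measurableSet_Ioc] with t htI
    have ht : t ∈ Icc (0:ℝ) 1 := Ioc_subset_Icc_self htI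
    have hΦnn : 0 ≤ Φ t := div_nonneg (Real.sqrt_nonneg _) (Real.sqrt_nonneg _)
    rw [Real.norm_eq_abs, Real.norm_eq_abs, abs_of_nonneg hΦnn]
    exact (hbd t ht).trans (le_abs_self _)
  -- a.e. equality
  have hae : speedOf gY γ =ᵐ[volume.restrict (Ioc (0:ℝ) 1)] Φ := by
    filter_upwards [hsnull, ae_restrict_mem measurableSet_Ioc] with t hts htI
    exact hkey t ⟨Ioc_subset_Icc_self htI, hts⟩
  have hγint : IntervalIntegrable (speedOf gY γ) volume 0 1 := by
    rw [intervalIntegrable_iff_integrableOn_Ioc_of_le zero_le_one]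
    exact hΦint.congr hae.symm
  -- the projected path is admissible
  have hmemγ : lengthOf gY γ ∈ {L : ℝ | ∃ c' : ℝ → F, IsPiecewisePath c' ∧
      (∀ t ∈ Set.Icc (0:ℝ) 1, c' t ∈ Y) ∧
      IntervalIntegrable (speedOf gY c') MeasureTheory.volume 0 1 ∧
      c' 0 = (c 0).2 ∧ c' 1 = (c 1).2 ∧ L = lengthOf gY c'} :=
    ⟨γ, ⟨continuous_snd.comp_continuousOn hccont, s, fun t ht => (hcdiff t ht).snd⟩,
      (fun t ht => (hmem t ht).2), hγint, rfl, rfl, rfl⟩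
  have hbdd : BddBelow {L : ℝ | ∃ c' : ℝ → F, IsPiecewisePath c' ∧
      (∀ t ∈ Set.Icc (0:ℝ) 1, c' t ∈ Y) ∧
      IntervalIntegrable (speedOf gY c') MeasureTheory.volume 0 1 ∧
      c' 0 = (c 0).2 ∧ c' 1 = (c 1).2 ∧ L = lengthOf gY c'} := by
    refine ⟨0, ?_⟩
    rintro L ⟨c', -, -, -, -, -, rfl⟩
    exact length_nonneg _ _
  have hd_le : pseudoDistOf Y gY (c 0).2 (c 1).2 ≤ lengthOf gY γ := csInf_le hbdd hmemγ
  -- compare the lengths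
  have hlen : lengthOf gY γ ≤ (1 / Real.sqrt m) * lengthOf (warpedW k w gY) c := by
    have hle_ae : speedOf gY γ ≤ᵐ[volume.restrict (Icc (0:ℝ) 1)]
        fun t => 1 / Real.sqrt m * σ t := by
      have hsnull' : ∀ᵐ t ∂volume.restrict (Icc (0:ℝ) 1), t ∉ (s : Set ℝ) := by
        refine ae_restrict_of_ae ?_
        have : (volume : Measure ℝ) (s : Set ℝ) = 0 := (Finset.finite_toSet s).measure_zero _
        exact (MeasureTheory.measure_eq_zero_iff_ae_notMem).1 this
      filter_upwards [hsnull', ae_restrict_mem measurableSet_Icc] with t hts htI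
      rw [hkey t ⟨htI, hts⟩]
      exact hbd t htI
    have h := intervalIntegral.integral_mono_ae_restrict zero_le_one hγint
      (hint.const_mul (1 / Real.sqrt m)) hle_ae
    calc lengthOf gY γ = ∫ t in (0:ℝ)..1, speedOf gY γ t := rfl
      _ ≤ ∫ t in (0:ℝ)..1, 1 / Real.sqrt m * σ t := h
      _ = (1 / Real.sqrt m) * lengthOf (warpedW k w gY) c := by
          rw [intervalIntegral.integral_const_mul]; rfl
  exact hd_le.trans hlen

/-- Upper bound: the diagonal path `(r₀ + t(r₁-r₀), γ t)` is admissible and its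
length is at most `|T r₀ - T r₁| + √M · L_{gY}(γ)`. -/
lemma diag_exists {F : Type*} [NormedAddCommGroup F] [NormedSpace ℝ F]
    {Y : Set F} {gY : F → F → F → ℝ}
    (hlin : ∀ x ∈ Y, ∀ u, IsLinearMap ℝ (gY x u))
    (hpos : ∀ y ∈ Y, ∀ a : F, a ≠ 0 → 0 < gY y a a)
    {k : ℝ} (hk : 0 < k) {w : ℝ → ℝ} (hw : ContinuousOn w (Ioi 0))
    (hwpos : ∀ r > (0:ℝ), 0 < w r) {R₀ : ℝ} (hR₀ : 0 < R₀)
    {M : ℝ} {r₀ r₁ : ℝ} (hr₀ : 0 < r₀) (hr₁ : 0 < r₁)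
    (hMle : ∀ x ∈ uIcc r₀ r₁, w x ≤ M)
    {y₀ y₁ : F} (hy₀ : y₀ ∈ Y) (hy₁ : y₁ ∈ Y)
    {γ : ℝ → F} (hγ : IsPiecewisePath γ) (hγY : ∀ t ∈ Icc (0:ℝ) 1, γ t ∈ Y)
    (hγint : IntervalIntegrable (speedOf gY γ) volume 0 1)
    (hγ0 : γ 0 = y₀) (hγ1 : γ 1 = y₁) :
    ∃ L ∈ {L : ℝ | ∃ c : ℝ → ℝ × F, IsPiecewisePath c ∧
      (∀ t ∈ Set.Icc (0:ℝ) 1, c t ∈ RegionW Y) ∧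
      IntervalIntegrable (speedOf (warpedW k w gY) c) MeasureTheory.volume 0 1 ∧
      c 0 = (r₀, y₀) ∧ c 1 = (r₁, y₁) ∧ L = lengthOf (warpedW k w gY) c},
      L ≤ |TW k w R₀ r₀ - TW k w R₀ r₁| + Real.sqrt M * lengthOf gY γ := by
  obtain ⟨hγcont, sγ, hγdiff⟩ := hγ
  set ρ : ℝ → ℝ := fun t => r₀ + t * (r₁ - r₀) with hρdef
  set c : ℝ → ℝ × F := fun t => (ρ t, γ t) with hcdef
  have hρc : Continuous ρ := by
    simp only [hρdef]; exact continuous_const.add (continuous_id.mul continuous_const)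
  have hρD : ∀ t : ℝ, HasDerivAt ρ (r₁ - r₀) t := by
    intro t
    exact (hasDerivAt_mul_const (r₁ - r₀)).const_add r₀ (x := t)
  have hρmem : ∀ t ∈ Icc (0:ℝ) 1, ρ t ∈ uIcc r₀ r₁ := by
    intro t ht
    simp only [hρdef]
    rcases le_total r₀ r₁ with h | h
    · rw [uIcc_of_le h]
      exact ⟨by nlinarith [ht.1, ht.2], by nlinarith [ht.1, ht.2]⟩
    · rw [uIcc_of_ge h]
      exact ⟨by nlinarith [ht.1, ht.2], by nlinarith [ht.1, ht.2]⟩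
  have hρpos : ∀ t ∈ Icc (0:ℝ) 1, 0 < ρ t := fun t ht =>
    lt_of_lt_of_le (lt_min hr₀ hr₁) (hρmem t ht).1
  set K : ℝ → ℝ := fun t => k * w (ρ t) / ρ t ^ 2 * (r₁ - r₀) ^ 2 with hKdef
  set W : ℝ → ℝ := fun t => w (ρ t) with hWdef
  set Ψ : ℝ → ℝ := fun t => Real.sqrt (K t + W t * (speedOf gY γ t) ^ 2) with hΨdef
  set B : ℝ → ℝ := fun t => Real.sqrt (K t) + Real.sqrt (W t) * speedOf gY γ t with hBdef
  have hWpos : ∀ t ∈ Icc (0:ℝ) 1, 0 < W t := fun t ht => hwpos _ (hρpos t ht)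
  have hsγnn : ∀ t, 0 ≤ speedOf gY γ t := fun t => Real.sqrt_nonneg _
  -- path facts
  have hcc : ContinuousOn c (Icc (0:ℝ) 1) := (hρc.continuousOn).prodMk hγcont
  have hcdiff : ∀ t ∈ Icc (0:ℝ) 1 \ (sγ : Set ℝ), DifferentiableAt ℝ c t := fun t ht =>
    ((hρD t).differentiableAt).prodMk (hγdiff t ht)
  have hcD : ∀ t ∈ Icc (0:ℝ) 1 \ (sγ : Set ℝ), deriv c t = (r₁ - r₀, deriv γ t) :=
    fun t ht => ((hρD t).prodMk (hγdiff t ht).hasDerivAt).deriv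
  have hcmem : ∀ t ∈ Icc (0:ℝ) 1, c t ∈ RegionW Y := fun t ht => ⟨hρpos t ht, hγY t ht⟩
  -- (i) a.e. representation of the speed
  have hkey : ∀ t ∈ Icc (0:ℝ) 1 \ (sγ : Set ℝ), speedOf (warpedW k w gY) c t = Ψ t := by
    intro t ht
    have hgnn : 0 ≤ gY (γ t) (deriv γ t) (deriv γ t) := gY_nonneg hlin hpos (hγY t ht.1) _
    rw [speedOf, hcD t ht]
    simp only [speedOf, hΨdef, hcD t ht, warpedW, hcdef, hKdef, hWdef]
    congr 1
    rw [Real.sq_sqrt hgnn]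
    ring
  -- (ii) pointwise bound Ψ ≤ B
  have hbd : ∀ t ∈ Icc (0:ℝ) 1, Ψ t ≤ B t := by
    intro t ht
    have hK0 : 0 ≤ K t := by
      have h1 := (hWpos t ht).le
      have h2 := hρpos t ht
      simp only [hKdef, hWdef] at h1 ⊢
      positivity
    have hW0 : 0 ≤ W t := (hWpos t ht).le
    calc Ψ t ≤ Real.sqrt (K t) + Real.sqrt (W t * (speedOf gY γ t) ^ 2) :=
          sqrt_add_le' hK0 (mul_nonneg hW0 (sq_nonneg _))
      _ = B t := by rw [Real.sqrt_mul hW0, Real.sqrt_sq (hsγnn t)]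
  -- continuity of K, W on [0,1]
  have hWcont : ContinuousOn W (Icc (0:ℝ) 1) :=
    hw.comp hρc.continuousOn (fun t ht => hρpos t ht)
  have hKcont : ContinuousOn K (Icc (0:ℝ) 1) := by
    refine ((continuousOn_const.mul hWcont).div ((hρc.pow 2).continuousOn) ?_).mul
      continuousOn_const
    exact fun t ht => pow_ne_zero 2 (ne_of_gt (hρpos t ht))
  -- measurability / integrability
  have hrest : volume.restrict (Ioc (0:ℝ) 1) ≤ volume.restrict (Icc (0:ℝ) 1) :=
    Measure.restrict_mono Ioc_subset_Icc_self le_rfl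
  have hsγm : AEStronglyMeasurable (speedOf gY γ) (volume.restrict (Ioc (0:ℝ) 1)) :=
    hγint.1.aestronglyMeasurable
  have hKm : AEMeasurable K (volume.restrict (Ioc (0:ℝ) 1)) :=
    (hKcont.aemeasurable measurableSet_Icc).mono_measure hrest
  have hWm : AEMeasurable W (volume.restrict (Ioc (0:ℝ) 1)) :=
    (hWcont.aemeasurable measurableSet_Icc).mono_measure hrest
  have hsqrtm := Real.continuous_sqrt.measurable
  have hΨm : AEStronglyMeasurable Ψ (volume.restrict (Ioc (0:ℝ) 1)) :=
    (hsqrtm.comp_aemeasurable (hKm.add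
      (hWm.mul (hsγm.aemeasurable.pow_const 2)))).aestronglyMeasurable
  -- integrability of the two parts of B
  have hsqrtKii : IntervalIntegrable (fun t => Real.sqrt (K t)) volume 0 1 := by
    apply ContinuousOn.intervalIntegrable
    rw [uIcc_of_le zero_le_one]
    exact Real.continuous_sqrt.comp_continuousOn hKcont
  have hWsii : IntervalIntegrable (fun t => Real.sqrt (W t) * speedOf gY γ t) volume 0 1 := by
    rw [intervalIntegrable_iff_integrableOn_Ioc_of_le zero_le_one]
    refine Integrable.mono (hγint.1.const_mul (Real.sqrt M)) ?_ ?_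
    · exact ((hsqrtm.comp_aemeasurable hWm).mul hsγm.aemeasurable).aestronglyMeasurable
    · filter_upwards [ae_restrict_mem measurableSet_Ioc] with t htI
      have ht : t ∈ Icc (0:ℝ) 1 := Ioc_subset_Icc_self htI
      have h1 : Real.sqrt (W t) ≤ Real.sqrt M := Real.sqrt_le_sqrt (hMle _ (hρmem t ht))
      rw [Real.norm_eq_abs, Real.norm_eq_abs,
        abs_of_nonneg (mul_nonneg (Real.sqrt_nonneg _) (hsγnn t)),
        abs_of_nonneg (mul_nonneg (Real.sqrt_nonneg _) (hsγnn t))]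
      exact mul_le_mul_of_nonneg_right h1 (hsγnn t)
  have hBii : IntervalIntegrable B volume 0 1 := hsqrtKii.add hWsii
  -- integrability of Ψ and the speed of c
  have hΨint : IntegrableOn Ψ (Ioc (0:ℝ) 1) := by
    refine Integrable.mono (g := B)
      ((intervalIntegrable_iff_integrableOn_Ioc_of_le zero_le_one).1 hBii) hΨm ?_
    · filter_upwards [ae_restrict_mem measurableSet_Ioc] with t htI
      have ht : t ∈ Icc (0:ℝ) 1 := Ioc_subset_Icc_self htI
      have hBnn : 0 ≤ B t := add_nonneg (Real.sqrt_nonneg _)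
        (mul_nonneg (Real.sqrt_nonneg _) (hsγnn t))
      rw [Real.norm_eq_abs, Real.norm_eq_abs, abs_of_nonneg (Real.sqrt_nonneg _),
        abs_of_nonneg hBnn]
      exact hbd t ht
  have hsnull : ∀ᵐ t ∂(volume : Measure ℝ), t ∉ (sγ : Set ℝ) :=
    (MeasureTheory.measure_eq_zero_iff_ae_notMem).1 ((Finset.finite_toSet sγ).measure_zero _)
  have hae : speedOf (warpedW k w gY) c =ᵐ[volume.restrict (Ioc (0:ℝ) 1)] Ψ := by
    filter_upwards [ae_restrict_of_ae hsnull, ae_restrict_mem measurableSet_Ioc] with t hts htI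
    exact hkey t ⟨Ioc_subset_Icc_self htI, hts⟩
  have hcint : IntervalIntegrable (speedOf (warpedW k w gY) c) volume 0 1 := by
    rw [intervalIntegrable_iff_integrableOn_Ioc_of_le zero_le_one]
    exact hΨint.congr hae.symm
  have hΨii : IntervalIntegrable Ψ volume 0 1 := by
    rw [intervalIntegrable_iff_integrableOn_Ioc_of_le zero_le_one]
    exact hΨint
  -- the length of c
  have hlen1 : lengthOf (warpedW k w gY) c = ∫ t in (0:ℝ)..1, Ψ t := by
    refine intervalIntegral.integral_congr_ae ?_
    rw [uIoc_of_le (zero_le_one' ℝ)]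
    filter_upwards [hsnull] with t hts htI
    exact hkey t ⟨Ioc_subset_Icc_self htI, hts⟩
  have hlen2 : ∫ t in (0:ℝ)..1, Ψ t ≤ ∫ t in (0:ℝ)..1, B t := by
    refine intervalIntegral.integral_mono_ae_restrict zero_le_one hΨii hBii ?_
    filter_upwards [ae_restrict_mem measurableSet_Icc] with t ht
    exact hbd t ht
  have hlen3 : ∫ t in (0:ℝ)..1, B t = (∫ t in (0:ℝ)..1, Real.sqrt (K t))
      + ∫ t in (0:ℝ)..1, Real.sqrt (W t) * speedOf gY γ t :=
    intervalIntegral.integral_add hsqrtKii hWsii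
  -- the radial part integrates to |ΔT|
  have hρ0 : ρ 0 = r₀ := by simp [hρdef]
  have hρ1 : ρ 1 = r₁ := by simp [hρdef]
  set f' : ℝ → ℝ := fun t => Real.sqrt (k * w (ρ t)) / ρ t * (r₁ - r₀) with hf'def
  have hf'cont : ContinuousOn f' (Icc (0:ℝ) 1) := by
    refine ((Real.continuous_sqrt.comp_continuousOn
      (continuousOn_const.mul hWcont)).div hρc.continuousOn ?_).mul continuousOn_const
    exact fun t ht => ne_of_gt (hρpos t ht)
  have hf'ii : IntervalIntegrable f' volume 0 1 := by
    apply ContinuousOn.intervalIntegrable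
    rwa [uIcc_of_le zero_le_one]
  have hFTC : ∫ t in (0:ℝ)..1, f' t = TW k w R₀ r₁ - TW k w R₀ r₀ := by
    have := intervalIntegral.integral_eq_sub_of_hasDerivAt (f := fun u => TW k w R₀ (ρ u))
      (f' := f') (a := (0:ℝ)) (b := 1) ?_ hf'ii
    · rw [this]; simp only [hρ0, hρ1]
    · intro t ht
      rw [uIcc_of_le zero_le_one] at ht
      exact (TW_hasDerivAt hk hw hR₀ (hρpos t ht)).comp t (hρD t)
  have hsqrtK_abs : ∀ t ∈ Icc (0:ℝ) 1, Real.sqrt (K t) = |f' t| := by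
    intro t ht
    have hkw : 0 ≤ k * w (ρ t) := mul_nonneg hk.le (hWpos t ht).le
    have : (f' t) ^ 2 = K t := by
      simp only [hf'def, hKdef, mul_pow, div_pow, Real.sq_sqrt hkw]
    rw [← this, Real.sqrt_sq_eq_abs]
  have habs : |TW k w R₀ r₀ - TW k w R₀ r₁| = |∫ t in (0:ℝ)..1, f' t| := by
    rw [hFTC, abs_sub_comm]
  have hKint_eq : ∫ t in (0:ℝ)..1, Real.sqrt (K t) = |TW k w R₀ r₀ - TW k w R₀ r₁| := by
    rcases le_total r₀ r₁ with h | h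
    · have hf'nn : ∀ t ∈ Icc (0:ℝ) 1, 0 ≤ f' t := by
        intro t ht
        simp only [hf'def]
        have := hρpos t ht
        have : 0 ≤ Real.sqrt (k * w (ρ t)) / ρ t := by positivity
        nlinarith [sub_nonneg.2 h]
      have h1 : ∫ t in (0:ℝ)..1, Real.sqrt (K t) = ∫ t in (0:ℝ)..1, f' t := by
        refine intervalIntegral.integral_congr (fun t ht => ?_)
        rw [uIcc_of_le zero_le_one] at ht
        rw [hsqrtK_abs t ht, abs_of_nonneg (hf'nn t ht)]
      rw [h1, hFTC, abs_sub_comm,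
        abs_of_nonneg (sub_nonneg.2 (TW_le hk hw hwpos hR₀ hr₀ h))]
    · have hf'np : ∀ t ∈ Icc (0:ℝ) 1, f' t ≤ 0 := by
        intro t ht
        simp only [hf'def]
        have := hρpos t ht
        have : 0 ≤ Real.sqrt (k * w (ρ t)) / ρ t := by positivity
        nlinarith [sub_nonpos.2 h]
      have h1 : ∫ t in (0:ℝ)..1, Real.sqrt (K t) = ∫ t in (0:ℝ)..1, -f' t := by
        refine intervalIntegral.integral_congr (fun t ht => ?_)
        rw [uIcc_of_le zero_le_one] at ht
        rw [hsqrtK_abs t ht, abs_of_nonpos (hf'np t ht)]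
      rw [h1, intervalIntegral.integral_neg, hFTC,
        abs_of_nonneg (sub_nonneg.2 (TW_le hk hw hwpos hR₀ hr₁ h))]
      ring
  -- the angular part is at most √M times the gY-length
  have hWs_le : ∫ t in (0:ℝ)..1, Real.sqrt (W t) * speedOf gY γ t
      ≤ Real.sqrt M * lengthOf gY γ := by
    have h1 : ∫ t in (0:ℝ)..1, Real.sqrt (W t) * speedOf gY γ t
        ≤ ∫ t in (0:ℝ)..1, Real.sqrt M * speedOf gY γ t := by
      refine intervalIntegral.integral_mono_ae_restrict zero_le_one hWsii
        (hγint.const_mul _) ?_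
      filter_upwards [ae_restrict_mem measurableSet_Icc] with t ht
      exact mul_le_mul_of_nonneg_right
        (Real.sqrt_le_sqrt (hMle _ (hρmem t ht))) (hsγnn t)
    rw [intervalIntegral.integral_const_mul] at h1
    exact h1
  -- conclusion
  refine ⟨lengthOf (warpedW k w gY) c,
    ⟨c, ⟨hcc, sγ, hcdiff⟩, hcmem, hcint, ?_, ?_, rfl⟩, ?_⟩
  · simp only [hcdef, hρ0, hγ0]
  · simp only [hcdef, hρ1, hγ1]
  · calc lengthOf (warpedW k w gY) c = ∫ t in (0:ℝ)..1, Ψ t := hlen1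
      _ ≤ ∫ t in (0:ℝ)..1, B t := hlen2
      _ = (∫ t in (0:ℝ)..1, Real.sqrt (K t))
          + ∫ t in (0:ℝ)..1, Real.sqrt (W t) * speedOf gY γ t := hlen3
      _ ≤ |TW k w R₀ r₀ - TW k w R₀ r₁| + Real.sqrt M * lengthOf gY γ := by
          rw [hKint_eq]
          exact add_le_add le_rfl hWs_le

lemma pseudoDist_le_of_path {α : Type*} [NormedAddCommGroup α] [NormedSpace ℝ α]
    {U : Set α} {g : α → α → α → ℝ} {p q : α} {c : ℝ → α}
    (hc : IsPiecewisePath c) (hU : ∀ t ∈ Icc (0:ℝ) 1, c t ∈ U)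
    (hint : IntervalIntegrable (speedOf g c) volume 0 1) (h0 : c 0 = p) (h1 : c 1 = q) :
    pseudoDistOf U g p q ≤ lengthOf g c := by
  unfold pseudoDistOf
  refine csInf_le ⟨0, ?_⟩ ⟨c, hc, hU, hint, h0, h1, rfl⟩
  rintro L ⟨c', -, -, -, -, -, rfl⟩
  exact length_nonneg _ _

lemma exists_path_lt {α : Type*} [NormedAddCommGroup α] [NormedSpace ℝ α]
    {U : Set α} {g : α → α → α → ℝ} {p q : α} {x : ℝ}
    {c₀ : ℝ → α} (hc₀ : IsPiecewisePath c₀) (hU₀ : ∀ t ∈ Icc (0:ℝ) 1, c₀ t ∈ U)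
    (hi₀ : IntervalIntegrable (speedOf g c₀) volume 0 1) (h0 : c₀ 0 = p) (h1 : c₀ 1 = q)
    (h : pseudoDistOf U g p q < x) :
    ∃ c : ℝ → α, IsPiecewisePath c ∧ (∀ t ∈ Icc (0:ℝ) 1, c t ∈ U) ∧
      IntervalIntegrable (speedOf g c) volume 0 1 ∧ c 0 = p ∧ c 1 = q ∧
      lengthOf g c < x := by
  unfold pseudoDistOf at h
  have hmem : lengthOf g c₀ ∈ {L : ℝ | ∃ c : ℝ → α, IsPiecewisePath c ∧
      (∀ t ∈ Set.Icc (0:ℝ) 1, c t ∈ U) ∧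
      IntervalIntegrable (speedOf g c) MeasureTheory.volume 0 1 ∧
      c 0 = p ∧ c 1 = q ∧ L = lengthOf g c} := ⟨c₀, hc₀, hU₀, hi₀, h0, h1, rfl⟩
  obtain ⟨L, hL, hLx⟩ := exists_lt_of_csInf_lt (Set.nonempty_of_mem hmem) h
  obtain ⟨c, h1', h2', h3', h4', h5', rfl⟩ := hL
  exact ⟨c, h1', h2', h3', h4', h5', hLx⟩

lemma le_pseudoDist {α : Type*} [NormedAddCommGroup α] [NormedSpace ℝ α]
    {U : Set α} {g : α → α → α → ℝ} {p q : α} {A : ℝ}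
    {c₀ : ℝ → α} (hc₀ : IsPiecewisePath c₀) (hU₀ : ∀ t ∈ Icc (0:ℝ) 1, c₀ t ∈ U)
    (hi₀ : IntervalIntegrable (speedOf g c₀) volume 0 1) (h0 : c₀ 0 = p) (h1 : c₀ 1 = q)
    (h : ∀ c : ℝ → α, IsPiecewisePath c → (∀ t ∈ Icc (0:ℝ) 1, c t ∈ U) →
      IntervalIntegrable (speedOf g c) volume 0 1 → c 0 = p → c 1 = q →
      A ≤ lengthOf g c) :
    A ≤ pseudoDistOf U g p q := by
  unfold pseudoDistOf
  refine le_csInf ⟨_, ⟨c₀, hc₀, hU₀, hi₀, h0, h1, rfl⟩⟩ ?_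
  rintro L ⟨c, h1', h2', h3', h4', h5', rfl⟩
  exact h c h1' h2' h3' h4' h5'

lemma pseudoDist_nonneg {α : Type*} [NormedAddCommGroup α] [NormedSpace ℝ α]
    (U : Set α) (g : α → α → α → ℝ) (p q : α) : 0 ≤ pseudoDistOf U g p q := by
  unfold pseudoDistOf
  refine Real.sInf_nonneg ?_
  rintro L ⟨c', -, -, -, -, -, rfl⟩
  exact length_nonneg _ _

end S11

/-- Lemma `lem:R12`.  For the Riemannian metric `g = g(w)` on
`ℝ_{>0} × Y` whose induced pseudometric `d_g` is a metric, and fixed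
`0 < R₁ < R₂`, there are `δ = δ(R₁,R₂,T) > 0` and constants
`C' = C'(R₁,R₂,w) > 0`, `C'' = C''(R₁,R₂,w) > 0` such that for all
`(r₀,y₀), (r₁,y₁) ∈ (R₁,R₂) × Y`:
(1) `d_g((r₀,y₀),(r₁,y₁)) < δ → d_{g_Y}(y₀,y₁) ≤ C'·d_g((r₀,y₀),(r₁,y₁))`;
(2) `d_g((r₀,y₀),(r₁,y₁)) ≤ |T(r₀) − T(r₁)| + C''·d_{g_Y}(y₀,y₁)`. -/
theorem statement_11
    {F : Type*} [NormedAddCommGroup F] [NormedSpace ℝ F]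
    (Y : Set F) (hYopen : IsOpen Y)
    (gY : F → F → F → ℝ) (hgY : IsPseudoMetricOn Y gY)
    (hgYpos : ∀ y ∈ Y, ∀ a : F, a ≠ 0 → 0 < gY y a a)
    (hgYsm : ∀ u v, ContDiffOn ℝ (⊤ : ℕ∞) (fun y => gY y u v) Y)
    (k : ℝ) (hk : 0 < k)
    (w : ℝ → ℝ) (hw : ContDiffOn ℝ (⊤ : ℕ∞) w (Ioi 0)) (hwpos : ∀ r > (0:ℝ), 0 < w r)
    -- `Y` (hence `ℝ_{>0} × Y`) is connected by piecewise smooth paths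
    (hconn : ∀ y ∈ Y, ∀ y' ∈ Y, ∃ c : ℝ → F,
      IsPiecewisePath c ∧ (∀ t ∈ Set.Icc (0:ℝ) 1, c t ∈ Y) ∧
      IntervalIntegrable (speedOf gY c) MeasureTheory.volume 0 1 ∧
      c 0 = y ∧ c 1 = y')
    -- the induced pseudometric `d_g` is a metric (on the region `ℝ_{>0} × Y`)
    (hdg : IsMetricD (fun p q : ↥(RegionW Y) =>
      pseudoDistOf (RegionW Y) (warpedW k w gY) p.1 q.1))
    (R₀ : ℝ) (hR₀ : 0 < R₀)
    (R₁ R₂ : ℝ) (hR₁ : 0 < R₁) (hR₁₂ : R₁ < R₂) :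
    ∃ δ > (0:ℝ), ∃ C' > (0:ℝ), ∃ C'' > (0:ℝ),
      ∀ r₀ ∈ Ioo R₁ R₂, ∀ y₀ ∈ Y, ∀ r₁ ∈ Ioo R₁ R₂, ∀ y₁ ∈ Y,
        -- (1)
        (pseudoDistOf (RegionW Y) (warpedW k w gY) (r₀, y₀) (r₁, y₁) < δ →
          pseudoDistOf Y gY y₀ y₁ ≤
            C' * pseudoDistOf (RegionW Y) (warpedW k w gY) (r₀, y₀) (r₁, y₁)) ∧
        -- (2)
        (pseudoDistOf (RegionW Y) (warpedW k w gY) (r₀, y₀) (r₁, y₁) ≤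
          |TW k w R₀ r₀ - TW k w R₀ r₁| + C'' * pseudoDistOf Y gY y₀ y₁) := by
  classical
  have hwc : ContinuousOn w (Ioi 0) := hw.continuousOn
  have hlin : ∀ x ∈ Y, ∀ u, IsLinearMap ℝ (gY x u) := hgY.2.1
  set a := R₁ / 2 with hadef
  set b := R₂ + 1 with hbdef
  have hR₂0 : 0 < R₂ := hR₁.trans hR₁₂
  have ha0 : 0 < a := half_pos hR₁
  have haR₁ : a < R₁ := by rw [hadef]; linarith
  have hR₂b : R₂ < b := by rw [hbdef]; linarith
  have hab : a ≤ b := by rw [hadef, hbdef]; linarith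
  -- min and max of w on [a, b]
  have hne : (Icc a b).Nonempty := ⟨a, left_mem_Icc.2 hab⟩
  have hwIcc : ContinuousOn w (Icc a b) :=
    hwc.mono (fun x hx => lt_of_lt_of_le ha0 hx.1)
  obtain ⟨xm, hxm, hxmle'⟩ := isCompact_Icc.exists_isMinOn hne hwIcc
  obtain ⟨xM, hxM, hxMge'⟩ := isCompact_Icc.exists_isMaxOn hne hwIcc
  have hxmle : ∀ x ∈ Icc a b, w xm ≤ w x := fun x hx => hxmle' hx
  have hxMge : ∀ x ∈ Icc a b, w x ≤ w xM := fun x hx => hxMge' hx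
  set m := w xm with hmdef
  set M := w xM with hMdef
  have hm0 : 0 < m := hwpos xm (lt_of_lt_of_le ha0 hxm.1)
  have hM0 : 0 < M := hwpos xM (lt_of_lt_of_le ha0 hxM.1)
  -- the constant δ
  set δ := min (TW k w R₀ R₁ - TW k w R₀ a) (TW k w R₀ b - TW k w R₀ R₂) with hδdef
  have hδ0 : 0 < δ := lt_min
    (sub_pos.2 (S11.TW_lt hk hwc hwpos hR₀ ha0 haR₁))
    (sub_pos.2 (S11.TW_lt hk hwc hwpos hR₀ hR₂0 hR₂b))
  refine ⟨δ, hδ0, 1 / Real.sqrt m, by positivity, Real.sqrt M, Real.sqrt_pos.2 hM0, ?_⟩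
  intro r₀ hr₀ y₀ hy₀ r₁ hr₁ y₁ hy₁
  have hr₀0 : 0 < r₀ := hR₁.trans hr₀.1
  have hr₁0 : 0 < r₁ := hR₁.trans hr₁.1
  have hr₀ab : a < r₀ := haR₁.trans hr₀.1
  have hr₁ab : a < r₁ := haR₁.trans hr₁.1
  have hr₀b : r₀ < b := hr₀.2.trans hR₂b
  have hr₁b : r₁ < b := hr₁.2.trans hR₂b
  -- a basic path from y₀ to y₁ in Y
  obtain ⟨γ₀, hγ₀pw, hγ₀Y, hγ₀int, hγ₀0, hγ₀1⟩ := hconn y₀ hy₀ y₁ hy₁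
  have hMle' : ∀ x ∈ uIcc r₀ r₁, w x ≤ M := by
    intro x hx
    refine hxMge x ⟨le_trans (le_min hr₀ab.le hr₁ab.le) hx.1,
      le_trans hx.2 (max_le hr₀b.le hr₁b.le)⟩
  -- upper bound via a diagonal path (also used for nonemptiness)
  have hdiag : ∀ γ : ℝ → F, IsPiecewisePath γ → (∀ t ∈ Icc (0:ℝ) 1, γ t ∈ Y) →
      IntervalIntegrable (speedOf gY γ) MeasureTheory.volume 0 1 → γ 0 = y₀ → γ 1 = y₁ →
      pseudoDistOf (RegionW Y) (warpedW k w gY) (r₀, y₀) (r₁, y₁) ≤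
        |TW k w R₀ r₀ - TW k w R₀ r₁| + Real.sqrt M * lengthOf gY γ := by
    intro γ hγpw hγY hγint hγ0 hγ1
    obtain ⟨L, hLmem, hLle⟩ := S11.diag_exists hlin hgYpos hk hwc hwpos hR₀ hr₀0 hr₁0
      hMle' hy₀ hy₁ hγpw hγY hγint hγ0 hγ1
    obtain ⟨c, hcpw, hcm, hci, hc0, hc1, rfl⟩ := hLmem
    exact (S11.pseudoDist_le_of_path hcpw hcm hci hc0 hc1).trans hLle
  constructor
  · -- Part (1)
    intro hlt
    refine le_of_forall_pos_le_add ?_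
    intro ε hε
    set dg := pseudoDistOf (RegionW Y) (warpedW k w gY) (r₀, y₀) (r₁, y₁) with hdgdef
    -- a diagonal path witnesses nonemptiness of the competitor set
    obtain ⟨L₀, hL₀mem, _⟩ := S11.diag_exists hlin hgYpos hk hwc hwpos hR₀ hr₀0 hr₁0
      hMle' hy₀ hy₁ hγ₀pw hγ₀Y hγ₀int hγ₀0 hγ₀1
    obtain ⟨c₀, hc₀pw, hc₀m, hc₀i, hc₀0, hc₀1, rfl⟩ := hL₀mem
    have hlt2 : dg < min δ (dg + ε * Real.sqrt m) :=
      lt_min hlt (lt_add_of_pos_right _ (mul_pos hε (Real.sqrt_pos.2 hm0)))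
    obtain ⟨c, hcpw, hcmem, hcint, hc0, hc1, hclen⟩ :=
      S11.exists_path_lt hc₀pw hc₀m hc₀i hc₀0 hc₀1 hlt2
    have hclenδ : lengthOf (warpedW k w gY) c < δ := hclen.trans_le (min_le_left _ _)
    have hc01 : (c 0).1 = r₀ := by rw [hc0]
    have hc02 : (c 0).2 = y₀ := by rw [hc0]
    have hc11 : (c 1).1 = r₁ := by rw [hc1]
    have hc12 : (c 1).2 = y₁ := by rw [hc1]
    -- the radial coordinate stays in [a, b]
    have hrange : ∀ t ∈ Icc (0:ℝ) 1, (c t).1 ∈ Icc a b := by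
      intro t ht
      have hTbd := S11.length_ge_T hlin hgYpos hk hwc hwpos hR₀ hcpw hcmem hcint ht
      rw [hc01] at hTbd
      have hct0 : 0 < (c t).1 := (hcmem t ht).1
      have habs1 : TW k w R₀ r₀ - TW k w R₀ (c t).1 ≤ |TW k w R₀ (c t).1 - TW k w R₀ r₀| := by
        rw [abs_sub_comm]; exact le_abs_self _
      have habs2 : TW k w R₀ (c t).1 - TW k w R₀ r₀ ≤ |TW k w R₀ (c t).1 - TW k w R₀ r₀| :=
        le_abs_self _
      constructor
      · by_contra hcon
        push_neg at hcon
        have h1 : TW k w R₀ (c t).1 ≤ TW k w R₀ a :=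
          S11.TW_le hk hwc hwpos hR₀ hct0 hcon.le
        have h2 : TW k w R₀ R₁ ≤ TW k w R₀ r₀ :=
          S11.TW_le hk hwc hwpos hR₀ hR₁ hr₀.1.le
        have h3 : δ ≤ TW k w R₀ R₁ - TW k w R₀ a := min_le_left _ _
        linarith
      · by_contra hcon
        push_neg at hcon
        have h1 : TW k w R₀ b ≤ TW k w R₀ (c t).1 :=
          S11.TW_le hk hwc hwpos hR₀ (lt_of_lt_of_le ha0 hab) hcon.le
        have h2 : TW k w R₀ r₀ ≤ TW k w R₀ R₂ :=
          S11.TW_le hk hwc hwpos hR₀ hr₀0 hr₀.2.le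
        have h3 : δ ≤ TW k w R₀ b - TW k w R₀ R₂ := min_le_right _ _
        linarith
    have hproj := S11.proj_dist_le hlin hgYpos hk hwc hwpos hm0
      (fun x hx => hxmle x hx) hcpw hcmem hcint hrange
    rw [hc02, hc12] at hproj
    have hmul : (1 / Real.sqrt m) * lengthOf (warpedW k w gY) c ≤
        (1 / Real.sqrt m) * (dg + ε * Real.sqrt m) :=
      mul_le_mul_of_nonneg_left (hclen.trans_le (min_le_right _ _)).le (by positivity)
    have hcalc : (1 / Real.sqrt m) * (dg + ε * Real.sqrt m)
        = 1 / Real.sqrt m * dg + ε := by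
      have hsm : Real.sqrt m ≠ 0 := ne_of_gt (Real.sqrt_pos.2 hm0)
      field_simp
    calc pseudoDistOf Y gY y₀ y₁ ≤ (1 / Real.sqrt m) * lengthOf (warpedW k w gY) c := hproj
      _ ≤ (1 / Real.sqrt m) * (dg + ε * Real.sqrt m) := hmul
      _ = 1 / Real.sqrt m * dg + ε := hcalc
  · -- Part (2)
    have hkey : ∀ c : ℝ → F, IsPiecewisePath c → (∀ t ∈ Icc (0:ℝ) 1, c t ∈ Y) →
        IntervalIntegrable (speedOf gY c) MeasureTheory.volume 0 1 → c 0 = y₀ → c 1 = y₁ →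
        (pseudoDistOf (RegionW Y) (warpedW k w gY) (r₀, y₀) (r₁, y₁)
          - |TW k w R₀ r₀ - TW k w R₀ r₁|) / Real.sqrt M ≤ lengthOf gY c := by
      intro c h1 h2 h3 h4 h5
      have := hdiag c h1 h2 h3 h4 h5
      rw [div_le_iff₀ (Real.sqrt_pos.2 hM0)]
      nlinarith [Real.sqrt_pos.2 hM0]
    have hle := S11.le_pseudoDist hγ₀pw hγ₀Y hγ₀int hγ₀0 hγ₀1 hkey
    rw [div_le_iff₀ (Real.sqrt_pos.2 hM0)] at hle
    nlinarith [Real.sqrt_pos.2 hM0]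
end
end
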